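/- arXiv:1503.02919 — 6 statements merged into one kernel-verified Lean document; each statement's English description precedes it below -/
import Mathlib

section
/- Let Σ be a smooth fan with convex support. For a cone σ_I ∈ Σ set C_I = { d ∈ L⊗ℝ : d·u_i ≥ 0 for all i ∉ I }, where d·u_i denotes the i-th coordinate of d ∈ L ⊆ ℤ^m (extended to ℝ). Then for any k, l ∈ N ∩ |Σ| with k+l ∈ |Σ|, the element d(k,l) = Ψ(k)+Ψ(l)−Ψ(k+l) lies in L ∩ Σ_{σ_I ∈ Σ} C_I (i.e. it is an effective class). -/
open Finset
open scoped Classical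

/-- Membership in the cone spanned by the rays indexed by `I`,
with nonnegative integer coefficients. -/
def InCone {D m : ℕ} (b : Fin m → Fin D → ℤ) (I : Finset (Fin m)) (k : Fin D → ℤ) : Prop :=
  ∃ c : Fin m → ℕ, (∀ i, c i ≠ 0 → i ∈ I) ∧ k = ∑ i, (c i : ℤ) • b i

/-- A smooth (simplicial, with smooth cones) fan in `ℤ^D`, recorded combinatorially:
`b` are the primitive ray generators, `cones` the index sets of cones. -/
structure SmoothFan (D m : ℕ) where
  b : Fin m → Fin D → ℤ
  cones : Finset (Finset (Fin m))
  empty_mem : ∅ ∈ cones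
  ray_mem : ∀ i : Fin m, {i} ∈ cones
  downward : ∀ I ∈ cones, ∀ J ⊆ I, J ∈ cones
  smooth : ∀ I ∈ cones,
    LinearIndependent ℚ (fun i : {x // x ∈ I} => fun j => (b i.1 j : ℚ))
  inter : ∀ I ∈ cones, ∀ J ∈ cones, ∀ k, InCone b I k → InCone b J k → InCone b (I ∩ J) k
  convex : ∀ k l, (∃ I ∈ cones, InCone b I k) → (∃ J ∈ cones, InCone b J l) →
      ∃ K ∈ cones, InCone b K (k + l)

/-- `k` is a lattice point of the support `|Σ|` of the fan. -/
def SmoothFan.InSupport {D m : ℕ} (F : SmoothFan D m) (k : Fin D → ℤ) : Prop :=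
  ∃ I ∈ F.cones, InCone F.b I k

/-- The coefficient vector `Ψ(k) ∈ (ℤ_{≥0})^m` of a lattice point of the support. -/
noncomputable def SmoothFan.Psi {D m : ℕ} (F : SmoothFan D m) (k : Fin D → ℤ) : Fin m → ℕ :=
  if h : ∃ c : Fin m → ℕ, (∃ I ∈ F.cones, ∀ i, c i ≠ 0 → i ∈ I) ∧
      k = ∑ i, (c i : ℤ) • F.b i
  then h.choose else 0

/-- `d(k,l) = Ψ(k) + Ψ(l) − Ψ(k+l)`. -/
noncomputable def SmoothFan.dEff {D m : ℕ} (F : SmoothFan D m) (k l : Fin D → ℤ) :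
    Fin m → ℤ :=
  fun i => (F.Psi k i : ℤ) + (F.Psi l i : ℤ) - (F.Psi (k + l) i : ℤ)

namespace SmoothFan

variable {D m : ℕ} (F : SmoothFan D m) {k l : Fin D → ℤ}

theorem Psi_spec (hk : F.InSupport k) :
    (∃ I ∈ F.cones, ∀ i, F.Psi k i ≠ 0 → i ∈ I) ∧ k = ∑ i, (F.Psi k i : ℤ) • F.b i := by
  obtain ⟨I, hI, c, hc, hk⟩ := hk
  have h : ∃ c : Fin m → ℕ, (∃ I ∈ F.cones, ∀ i, c i ≠ 0 → i ∈ I) ∧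
      k = ∑ i, (c i : ℤ) • F.b i := ⟨c, ⟨I, hI, hc⟩, hk⟩
  rw [Psi, dif_pos h]
  exact h.choose_spec

theorem sum_Psi_smul (hk : F.InSupport k) : ∑ i, (F.Psi k i : ℤ) • F.b i = k :=
  (F.Psi_spec hk).2.symm

theorem exists_cone_support_Psi (hk : F.InSupport k) :
    ∃ I ∈ F.cones, ∀ i ∉ I, F.Psi k i = 0 := by
  obtain ⟨I, hI, hsupp⟩ := (F.Psi_spec hk).1
  exact ⟨I, hI, fun i hi => by_contra fun h => hi (hsupp i h)⟩

theorem sum_dEff_smul_eq_zero (hk : F.InSupport k) (hl : F.InSupport l)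
    (hkl : F.InSupport (k + l)) : ∑ i, F.dEff k l i • F.b i = 0 := by
  simp only [dEff, sub_smul, add_smul, sum_sub_distrib, sum_add_distrib,
    F.sum_Psi_smul hk, F.sum_Psi_smul hl, F.sum_Psi_smul hkl, sub_self]

theorem dEff_nonneg_of_Psi_add_eq_zero {i : Fin m}
    (hi : F.Psi (k + l) i = 0) : 0 ≤ F.dEff k l i := by
  simp only [dEff, hi, Nat.cast_zero, sub_zero]
  positivity

end SmoothFan

/-- Membership in `L ∩ Σ_{σ_I ∈ Σ} C_I` is witnessed by the single summand `C_{I₀}`,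
`σ_{I₀}` a cone containing `k + l`. -/
theorem dEff_effective {D m : ℕ} (F : SmoothFan D m) (k l : Fin D → ℤ)
    (hk : F.InSupport k) (hl : F.InSupport l) (hkl : F.InSupport (k + l)) :
    (∑ i, F.dEff k l i • F.b i = 0) ∧
    (∃ I ∈ F.cones, ∀ i ∉ I, 0 ≤ F.dEff k l i) := by
  obtain ⟨I, hI, hPsi⟩ := F.exists_cone_support_Psi hkl
  exact ⟨F.sum_dEff_smul_eq_zero hk hl hkl,
    I, hI, fun i hi => F.dEff_nonneg_of_Psi_add_eq_zero (hPsi i hi)⟩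
end

section
/- Existence and uniqueness of formal flows: Let R be a complete Hausdorff linearly topologized ℚ-algebra and let V = Σ_{n≥1} V_n(x) ∂/∂x_n be a formal vector field on Spf(R[[x]]) with V_n(x) ∈ R[[x]] and V_n(x) → 0 as n → ∞. Then there is a unique solution x(t) = (x_n(t)) to dx_n(t)/dt = V_n(x(t)), x_n(0) = x_n, defining a morphism Spf(R[[x]][[t]]) → Spf(R[[x]]); it is given by the exponential φ ↦ exp(tV)φ = Σ_{k≥0} (t^k/k!) V^k(φ). -/
/-!
The exponential `Φ(f) = ∑ₖ tᵏ/k! Vᵏ f` solves `dΦ(f)/dt = Φ(V f)`, `Φ(f)(0) = f`. Since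
`(k+1) [tᵏ⁺¹] Φ(f) = [tᵏ] Φ(V f)` and `k+1` is invertible in a ℚ-algebra, induction on `k` shows
that solutions are determined by their initial values. The same induction, fed by the Leibniz rules
for `V` and for `d/dt`, gives `Φ(fg) = Φ(f) Φ(g)`; continuity of `Φ` is the coefficientwise
continuity of the `Vᵏ`.
-/

open Filter

/-- The coefficient-wise (product) topology on multivariate formal power series,
matching the paper's topology on `R[[x]]` (coefficient-wise convergence). -/
noncomputable instance mvPowerSeriesPiTopology (σ R : Type*) [TopologicalSpace R] :
    TopologicalSpace (MvPowerSeries σ R) :=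
  inferInstanceAs (TopologicalSpace ((σ →₀ ℕ) → R))

noncomputable instance powerSeriesPiTopology (R : Type*) [TopologicalSpace R] :
    TopologicalSpace (PowerSeries R) :=
  inferInstanceAs (TopologicalSpace (MvPowerSeries Unit R))

/-- `R` is linearly topologized: the ideals contained in a given neighbourhood of `0`
form a fundamental system of neighbourhoods of `0`. -/
def LinearlyTopologized (R : Type*) [Ring R] [TopologicalSpace R] : Prop :=
  ∀ S ∈ nhds (0 : R), ∃ I : Ideal R, (I : Set R) ⊆ S ∧ (I : Set R) ∈ nhds (0 : R)

open PowerSeries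
open scoped Nat

namespace PowerSeries

variable {A : Type*} [CommSemiring A]

theorem succ_nsmul_coeff_succ (p : A⟦X⟧) (k : ℕ) :
    (k + 1) • coeff (k + 1) p = coeff k (d⁄dX A p) := by
  rw [coeff_derivative, nsmul_eq_mul', Nat.cast_succ]

variable [IsAddTorsionFree A]

theorem coeff_succ_eq_of_coeff_derivative_eq {p q : A⟦X⟧} {k : ℕ}
    (h : coeff k (d⁄dX A p) = coeff k (d⁄dX A q)) : coeff (k + 1) p = coeff (k + 1) q := by
  rw [← succ_nsmul_coeff_succ, ← succ_nsmul_coeff_succ] at h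
  exact nsmul_right_injective k.succ_ne_zero h

theorem ode_solution_unique {α : Type*} (T : α → α) {F G : α → A⟦X⟧}
    (hF : ∀ a, d⁄dX A (F a) = F (T a)) (hG : ∀ a, d⁄dX A (G a) = G (T a))
    (h0 : ∀ a, constantCoeff (F a) = constantCoeff (G a)) : F = G := by
  suffices h : ∀ k a, coeff k (F a) = coeff k (G a) from
    funext fun a => ext fun k => h k a
  intro k
  induction k with
  | zero => simpa using h0
  | succ k ih =>
    intro a
    exact coeff_succ_eq_of_coeff_derivative_eq (by rw [hF, hG, ih])

end PowerSeries

attribute [local instance] IsAddTorsionFree.of_module_rat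

namespace Derivation

variable {R A : Type*} [CommRing R] [CommRing A] [Algebra R A] [Algebra ℚ A]
  (V : Derivation R A A)

noncomputable def expSeries (f : A) : A⟦X⟧ :=
  PowerSeries.mk fun k => (k ! : ℚ)⁻¹ • (⇑V)^[k] f

theorem coeff_expSeries (f : A) (k : ℕ) :
    coeff k (V.expSeries f) = (k ! : ℚ)⁻¹ • (⇑V)^[k] f :=
  coeff_mk _ _

theorem constantCoeff_expSeries (f : A) : constantCoeff (V.expSeries f) = f := by
  rw [← coeff_zero_eq_constantCoeff_apply, coeff_expSeries]
  simp

theorem expSeries_zero : V.expSeries 0 = 0 := by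
  ext k
  simp [coeff_expSeries, iterate_map_zero]

theorem expSeries_add (f g : A) : V.expSeries (f + g) = V.expSeries f + V.expSeries g := by
  ext k
  simp [coeff_expSeries, iterate_map_add]

theorem derivative_expSeries (f : A) : d⁄dX A (V.expSeries f) = V.expSeries (V f) := by
  ext k
  rw [← succ_nsmul_coeff_succ, coeff_expSeries, coeff_expSeries, Function.iterate_succ_apply,
    ← Nat.cast_smul_eq_nsmul ℚ, smul_smul, Nat.factorial_succ]
  congr 1
  push_cast
  field_simp

theorem expSeries_mul (f g : A) : V.expSeries (f * g) = V.expSeries f * V.expSeries g := by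
  suffices h : ∀ k f g, coeff k (V.expSeries (f * g)) = coeff k (V.expSeries f * V.expSeries g)
    from PowerSeries.ext fun k => h k f g
  intro k
  induction k with
  | zero =>
    intro f g
    simp only [coeff_zero_eq_constantCoeff_apply, map_mul, constantCoeff_expSeries]
  | succ k ih =>
    intro f g
    refine coeff_succ_eq_of_coeff_derivative_eq ?_
    rw [derivative_expSeries, leibniz, leibniz, derivative_expSeries, derivative_expSeries]
    simp only [smul_eq_mul, expSeries_add, map_add, ih]

noncomputable def expFlow : A →+* A⟦X⟧ where
  toFun := V.expSeries
  map_one' := derivative.ext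
    (by rw [derivative_expSeries, map_one_eq_zero, expSeries_zero, derivative_one])
    (by rw [constantCoeff_expSeries, map_one])
  map_mul' := V.expSeries_mul
  map_zero' := V.expSeries_zero
  map_add' := V.expSeries_add

theorem continuous_expSeries [TopologicalSpace A] [ContinuousConstSMul ℚ A] (hV : Continuous V) :
    Continuous V.expSeries :=
  continuous_pi fun d => (hV.iterate (d ())).const_smul _

end Derivation

instance MvPowerSeries.continuousConstSMul {σ R S : Type*} [AddCommMonoid R] [Semiring S]
    [Module S R] [TopologicalSpace R] [ContinuousConstSMul S R] :
    ContinuousConstSMul S (MvPowerSeries σ R) :=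
  inferInstanceAs (ContinuousConstSMul S ((σ →₀ ℕ) → R))

theorem formal_flow_exists_unique_general
    (R : Type*) [CommRing R] [Algebra ℚ R] [UniformSpace R] [IsTopologicalRing R]
    (V : Derivation R (MvPowerSeries ℕ R) (MvPowerSeries ℕ R))
    (hVcont : Continuous V) :
    ∃ Φ : MvPowerSeries ℕ R →+* PowerSeries (MvPowerSeries ℕ R),
      ((Continuous Φ ∧
        (∀ f, PowerSeries.constantCoeff (Φ f) = f) ∧
        (∀ f k, (k + 1 : ℕ) • PowerSeries.coeff (R := MvPowerSeries ℕ R) (k + 1) (Φ f) =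
          PowerSeries.coeff (R := MvPowerSeries ℕ R) k (Φ (V f)))) ∧
       (∀ f k, PowerSeries.coeff (R := MvPowerSeries ℕ R) k (Φ f) =
          ((k.factorial : ℚ)⁻¹) • (⇑V)^[k] f)) ∧
      (∀ Φ' : MvPowerSeries ℕ R →+* PowerSeries (MvPowerSeries ℕ R),
        (Continuous Φ' ∧
         (∀ f, PowerSeries.constantCoeff (Φ' f) = f) ∧
         (∀ f k, (k + 1 : ℕ) • PowerSeries.coeff (R := MvPowerSeries ℕ R) (k + 1) (Φ' f) =
            PowerSeries.coeff (R := MvPowerSeries ℕ R) k (Φ' (V f)))) → Φ' = Φ) := by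
  refine ⟨V.expFlow, ⟨⟨V.continuous_expSeries hVcont, V.constantCoeff_expSeries, fun f k => ?_⟩,
    V.coeff_expSeries⟩, fun Φ' ⟨_, h0, hODE⟩ => ?_⟩
  · exact (succ_nsmul_coeff_succ _ k).trans (congrArg (coeff k) (V.derivative_expSeries f))
  · have hΦ' (f : MvPowerSeries ℕ R) : d⁄dX _ (Φ' f) = Φ' (V f) :=
      PowerSeries.ext fun k => (succ_nsmul_coeff_succ _ k).symm.trans (hODE f k)
    refine DFunLike.coe_injective (ode_solution_unique V hΦ' V.derivative_expSeries fun f => ?_)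
    rw [h0]
    exact (V.constantCoeff_expSeries f).symm

/-- existence and uniqueness of formal flows.  Let `R` be a complete
Hausdorff linearly topologized ℚ-algebra and `V = Σ_n V_n(x) ∂/∂x_n` a formal vector
field on `Spf R[[x]]`, recorded as a continuous `R`-derivation of `R[[x]]` with
`V(x_n) → 0`.  Then there is a unique solution of `dx_n(t)/dt = V_n(x(t))`,
`x_n(0) = x_n`, defining a morphism `Spf R[[x]][[t]] → Spf R[[x]]`: equivalently, a
unique continuous ring homomorphism `Φ : R[[x]] → R[[x]][[t]]` with `Φ(φ)|_{t=0} = φ`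
and `d/dt Φ(φ) = Φ(V φ)`; it is given by the exponential
`Φ(φ) = Σ_k (t^k/k!) V^k(φ)`. -/
theorem formal_flow_exists_unique
    (R : Type*) [CommRing R] [Algebra ℚ R] [UniformSpace R] [IsUniformAddGroup R]
    [CompleteSpace R] [T2Space R] [IsTopologicalRing R]
    (hlin : LinearlyTopologized R)
    (V : Derivation R (MvPowerSeries ℕ R) (MvPowerSeries ℕ R))
    (hVcont : Continuous V)
    (hVtend : Tendsto (fun n => V (MvPowerSeries.X n)) atTop (nhds 0)) :
    ∃ Φ : MvPowerSeries ℕ R →+* PowerSeries (MvPowerSeries ℕ R),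
      ((Continuous Φ ∧
        (∀ f, PowerSeries.constantCoeff (Φ f) = f) ∧
        (∀ f k, (k + 1 : ℕ) • PowerSeries.coeff (R := MvPowerSeries ℕ R) (k + 1) (Φ f) =
          PowerSeries.coeff (R := MvPowerSeries ℕ R) k (Φ (V f)))) ∧
       (∀ f k, PowerSeries.coeff (R := MvPowerSeries ℕ R) k (Φ f) =
          ((k.factorial : ℚ)⁻¹) • (⇑V)^[k] f)) ∧
      (∀ Φ' : MvPowerSeries ℕ R →+* PowerSeries (MvPowerSeries ℕ R),
        (Continuous Φ' ∧
         (∀ f, PowerSeries.constantCoeff (Φ' f) = f) ∧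
         (∀ f k, (k + 1 : ℕ) • PowerSeries.coeff (R := MvPowerSeries ℕ R) (k + 1) (Φ' f) =
            PowerSeries.coeff (R := MvPowerSeries ℕ R) k (Φ' (V f)))) → Φ' = Φ) :=
  formal_flow_exists_unique_general R V hVcont
end

section
/- Time-one flow: With R, x, V as in the formal flow theorem, let I ⊆ R be an ideal such that for every open neighbourhood R_ν of 0 there exists n with I^n ⊆ R_ν. If V_n(x) ∈ I[[x]] for all n, then V^k(φ) → 0 as k → ∞ uniformly in φ ∈ R[[x]], the substitution t = 1 in exp(tV)φ converges, and one obtains a well-defined time-one flow automorphism Spf(R[[x]]) → Spf(R[[x]]). -/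
open Filter

/-! Every coefficient of `V x_n` lies in `I`, so by the Leibniz rule and continuity `V` maps
series with coefficients in `J` to series with coefficients in the closure of `J * I`. Hence all
coefficients of `V^k φ` lie in the closure of `I^k`, which eventually lies in any open ideal:
`V^k → 0` uniformly in `φ`. In the complete, linearly topologized ring `R[[x]]` every family
tending to zero is summable, so the exponential series converges, and uniformly so, which makes
it continuous. The iterated Leibniz rule and the Cauchy product make it multiplicative, and
regrouping the double series of `exp (-V) (exp V φ)` along antidiagonals leaves the coefficients
of `e^{-X} e^X = 1`, so `exp (-V)` is its inverse. -/

open Filter Topology Finset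

section LinearTopology

variable {R : Type*} [CommRing R] [TopologicalSpace R]

theorem LinearlyTopologized.isLinearTopology (h : LinearlyTopologized R) :
    IsLinearTopology R R :=
  isLinearTopology_iff_hasBasis_ideal.2 ⟨fun S =>
    ⟨fun hS => let ⟨J, hJS, hJ⟩ := h S hS; ⟨J, hJ, hJS⟩,
      fun ⟨_, hJ, hJS⟩ => mem_of_superset hJ hJS⟩⟩

variable [IsTopologicalRing R]

instance IsLinearTopology.nonarchimedeanRing [IsLinearTopology R R] : NonarchimedeanRing R where
  is_nonarchimedean U hU := by
    obtain ⟨J, hJ, hJU⟩ := IsLinearTopology.hasBasis_open_ideal.mem_iff.1 hU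
    exact ⟨⟨J.toAddSubgroup, hJ⟩, hJU⟩

theorem Ideal.closure_closure_mul_le (J K : Ideal R) :
    (J.closure * K).closure ≤ (J * K).closure :=
  closure_minimal (Ideal.mul_le.2 fun _ ha b hb => map_mem_closure (f := (· * b))
    (continuous_mul_const b) ha fun _ hx => Ideal.mul_mem_mul hx hb) isClosed_closure

theorem Ideal.eventually_closure_pow_subset [IsLinearTopology R R] {I : Ideal R}
    (hI : ∀ S ∈ 𝓝 (0 : R), ∃ n : ℕ, ((I ^ n : Ideal R) : Set R) ⊆ S) {S : Set R}
    (hS : S ∈ 𝓝 0) : ∀ᶠ k in atTop, closure ((I ^ k : Ideal R) : Set R) ⊆ S := by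
  obtain ⟨J, hJ, hJS⟩ := IsLinearTopology.hasBasis_open_ideal.mem_iff.1 hS
  obtain ⟨n, hn⟩ := hI J (hJ.mem_nhds J.zero_mem)
  filter_upwards [eventually_ge_atTop n] with k hk
  exact (closure_minimal ((Ideal.pow_le_pow_right hk).trans hn)
    (J.toAddSubgroup.isClosed_of_isOpen hJ)).trans hJS

end LinearTopology

theorem tendsto_ratSMul_zero {A ι : Type*} [Ring A] [Algebra ℚ A] [TopologicalSpace A]
    [IsLinearTopology A A] {l : Filter ι} (c : ι → ℚ) {x : ι → A} (hx : Tendsto x l (𝓝 0)) :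
    Tendsto (fun i => c i • x i) l (𝓝 0) := by
  simp_rw [Algebra.smul_def]
  exact IsLinearTopology.tendsto_mul_zero_of_right _ _ hx

theorem HasSum.sum_antidiagonal {M N : Type*} [AddCommMonoid M] [TopologicalSpace M]
    [ContinuousAdd M] [RegularSpace M] [AddMonoid N] [HasAntidiagonal N] {f : N × N → M} {a : M}
    (h : HasSum f a) : HasSum (fun n => ∑ p ∈ antidiagonal n, f p) a :=
  (HasAntidiagonal.sigmaAntidiagonalEquivProd.hasSum_iff.2 h).sigma fun n =>
    (antidiagonal n).hasSum f

theorem tendsto_fst_add_snd_cofinite_atTop :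
    Tendsto (fun p : ℕ × ℕ => p.1 + p.2) cofinite atTop := by
  rw [← Nat.cofinite_eq_atTop]
  refine Tendsto.cofinite_of_finite_preimage_singleton fun n => ?_
  refine ((antidiagonal n).finite_toSet.subset fun p hp => ?_).to_subtype
  exact mem_antidiagonal.2 hp

theorem sum_antidiagonal_neg_one_pow_mul_inv_factorial_mul_inv_factorial (n : ℕ) :
    ∑ p ∈ antidiagonal n, (-1 : ℚ) ^ p.1 * (p.1.factorial : ℚ)⁻¹ * (p.2.factorial : ℚ)⁻¹ =
      if n = 0 then 1 else 0 := by
  have h := congrArg (PowerSeries.coeff n) (PowerSeries.exp_mul_exp_neg_eq_one (A := ℚ))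
  rw [mul_comm, PowerSeries.coeff_mul, PowerSeries.coeff_one] at h
  simpa [PowerSeries.evalNegHom, PowerSeries.coeff_rescale, PowerSeries.coeff_exp, mul_assoc]
    using h

namespace Derivation

variable {S A : Type*} [CommRing S] [CommRing A] [Algebra S A]

section Iterate

variable (D : Derivation S A A)

theorem iterate_mul (n : ℕ) (a b : A) :
    D^[n] (a * b) = ∑ p ∈ antidiagonal n, n.choose p.1 • (D^[p.1] a * D^[p.2] b) := by
  induction n with
  | zero => simp
  | succ n ih =>
    rw [sum_antidiagonal_choose_succ_nsmul (fun i j => D^[i] a * D^[j] b),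
      Function.iterate_succ_apply', ih, map_sum, ← sum_add_distrib]
    refine sum_congr rfl fun p hp => ?_
    rw [map_nsmul, leibniz, smul_eq_mul, smul_eq_mul, Function.iterate_succ_apply',
      Function.iterate_succ_apply', ← Nat.choose_symm_of_eq_add (mem_antidiagonal.1 hp).symm,
      ← smul_add, mul_comm (D^[p.2] b)]

theorem iterate_succ_one_eq_zero (k : ℕ) : D^[k + 1] 1 = 0 := by
  rw [Function.iterate_succ_apply, map_one_eq_zero, iterate_map_zero]

variable [Algebra ℚ A]

theorem iterate_ratSMul (k : ℕ) (q : ℚ) (a : A) : D^[k] (q • a) = q • D^[k] a :=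
  Function.Commute.iterate_left (fun x => map_rat_smul D q x) k a

theorem iterate_neg (k : ℕ) (a : A) : (⇑(-D))^[k] a = ((-1 : ℚ) ^ k) • D^[k] a := by
  induction k with
  | zero => simp
  | succ k ih =>
    rw [Function.iterate_succ_apply', ih, Function.iterate_succ_apply', coe_neg, Pi.neg_apply,
      map_rat_smul, pow_succ, mul_neg_one, neg_smul]

theorem sum_antidiagonal_smul_iterate_mul_smul_iterate (n : ℕ) (a b : A) :
    ∑ p ∈ antidiagonal n,
        ((p.1.factorial : ℚ)⁻¹ • D^[p.1] a) * ((p.2.factorial : ℚ)⁻¹ • D^[p.2] b) =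
      (n.factorial : ℚ)⁻¹ • D^[n] (a * b) := by
  rw [iterate_mul, smul_sum]
  refine sum_congr rfl fun p hp => ?_
  obtain rfl := mem_antidiagonal.1 hp
  rw [smul_mul_smul_comm, ← Nat.cast_smul_eq_nsmul ℚ, smul_smul]
  congr 1
  have h := Nat.add_choose_mul_factorial_mul_factorial p.1 p.2
  rw [← Nat.choose_symm_add] at h
  field_simp
  rw [← h]
  push_cast
  ring

theorem eventually_forall_iterate_neg_mem {U : Set A} (hD : ∀ᶠ k in atTop, ∀ a, D^[k] a ∈ U) :
    ∀ᶠ k in atTop, ∀ a, (⇑(-D))^[k] a ∈ U :=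
  hD.mono fun k hk a => by
    rw [iterate_neg, ← iterate_ratSMul]
    exact hk _

theorem tendsto_iterate_neg [TopologicalSpace A] [IsLinearTopology A A]
    (hD : ∀ a, Tendsto (fun k => D^[k] a) atTop (𝓝 0)) (a : A) :
    Tendsto (fun k => (⇑(-D))^[k] a) atTop (𝓝 0) := by
  simpa only [iterate_neg] using tendsto_ratSMul_zero _ (hD a)

end Iterate

noncomputable def exp [Algebra ℚ A] [TopologicalSpace A] (D : Derivation S A A) (a : A) : A :=
  ∑' k : ℕ, (k.factorial : ℚ)⁻¹ • D^[k] a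

section Exponential

variable [Algebra ℚ A] [UniformSpace A] [IsUniformAddGroup A] [CompleteSpace A]
  [IsTopologicalRing A] [IsLinearTopology A A] {D : Derivation S A A}

theorem hasSum_exp (hD : ∀ a, Tendsto (fun k => D^[k] a) atTop (𝓝 0)) (a : A) :
    HasSum (fun k : ℕ => (k.factorial : ℚ)⁻¹ • D^[k] a) (D.exp a) := by
  refine (NonarchimedeanAddGroup.summable_of_tendsto_cofinite_zero ?_).hasSum
  rw [Nat.cofinite_eq_atTop]
  exact tendsto_ratSMul_zero _ (hD a)

theorem exp_add [T2Space A] (hD : ∀ a, Tendsto (fun k => D^[k] a) atTop (𝓝 0)) (a b : A) :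
    D.exp (a + b) = D.exp a + D.exp b :=
  (hasSum_exp hD (a + b)).unique <| by
    simpa only [iterate_map_add, smul_add] using (hasSum_exp hD a).add (hasSum_exp hD b)

theorem exp_one [T2Space A] (hD : ∀ a, Tendsto (fun k => D^[k] a) atTop (𝓝 0)) :
    D.exp (1 : A) = 1 := by
  have h : HasSum (fun k : ℕ => (k.factorial : ℚ)⁻¹ • D^[k] (1 : A))
      (((0 : ℕ).factorial : ℚ)⁻¹ • D^[0] 1) := hasSum_single 0 fun k hk => by
    obtain ⟨k, rfl⟩ := Nat.exists_eq_succ_of_ne_zero hk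
    rw [iterate_succ_one_eq_zero, smul_zero]
  simpa using (hasSum_exp hD 1).unique h

theorem exp_mul [T2Space A] (hD : ∀ a, Tendsto (fun k => D^[k] a) atTop (𝓝 0)) (a b : A) :
    D.exp (a * b) = D.exp a * D.exp b := by
  have h := ((hasSum_exp hD a).mul_of_nonarchimedean (hasSum_exp hD b)).sum_antidiagonal
  simp only [sum_antidiagonal_smul_iterate_mul_smul_iterate] at h
  exact (hasSum_exp hD (a * b)).unique h

noncomputable def expRingHom [T2Space A] (hD : ∀ a, Tendsto (fun k => D^[k] a) atTop (𝓝 0)) :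
    A →+* A where
  toFun := D.exp
  map_one' := exp_one hD
  map_mul' := exp_mul hD
  map_zero' := by simpa using exp_add hD 0 0
  map_add' := exp_add hD

theorem continuous_exp [T2Space A] (hcont : Continuous D)
    (hD : ∀ U ∈ 𝓝 (0 : A), ∀ᶠ k in atTop, ∀ a, D^[k] a ∈ U) : Continuous D.exp := by
  have hD' : ∀ a, Tendsto (fun k => D^[k] a) atTop (𝓝 0) := fun a U hU =>
    (hD U hU).mono fun _ hk => hk a
  refine continuous_of_continuousAt_zero (D.expRingHom hD') ?_
  rw [ContinuousAt, map_zero]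
  refine IsLinearTopology.hasBasis_open_ideal.tendsto_right_iff.2 fun J hJ => ?_
  obtain ⟨K, hK⟩ := eventually_atTop.1 (hD J (hJ.mem_nhds J.zero_mem))
  have hhead : Continuous fun a => ∑ k ∈ range K, (k.factorial : ℚ)⁻¹ • D^[k] a :=
    continuous_finsetSum _ fun k _ => (hcont.iterate k).const_smul _
  filter_upwards [hhead.tendsto' 0 0 (by simp) (hJ.mem_nhds J.zero_mem)] with a ha
  change D.exp a ∈ J
  rw [exp, ← (hasSum_exp hD' a).summable.sum_add_tsum_nat_add K]
  exact J.add_mem ha <| tsum_mem (J.toAddSubgroup.isClosed_of_isOpen hJ) fun k =>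
    J.smul_of_tower_mem _ (hK _ (Nat.le_add_left K k) a)

theorem hasSum_iterate_exp (hcont : Continuous D)
    (hD : ∀ a, Tendsto (fun k => D^[k] a) atTop (𝓝 0)) (i : ℕ) (a : A) :
    HasSum (fun j : ℕ => (j.factorial : ℚ)⁻¹ • D^[i + j] a) (D^[i] (D.exp a)) := by
  have hi : Continuous ⇑(D.toLinearMap ^ i) := by
    rw [Module.End.coe_pow]
    exact hcont.iterate i
  have h := (hasSum_exp hD a).map _ hi
  rw [Module.End.coe_pow, coeFn_coe] at h
  simpa only [Function.comp_def, iterate_ratSMul, ← Function.iterate_add_apply] using h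

theorem exp_neg_exp [T2Space A] (hcont : Continuous D)
    (hD : ∀ a, Tendsto (fun k => D^[k] a) atTop (𝓝 0)) (a : A) : (-D).exp (D.exp a) = a := by
  set c : ℕ × ℕ → ℚ := fun p => (-1) ^ p.1 * (p.1.factorial : ℚ)⁻¹ * (p.2.factorial : ℚ)⁻¹
  obtain ⟨T, hT⟩ : Summable fun p : ℕ × ℕ => c p • D^[p.1 + p.2] a :=
    NonarchimedeanAddGroup.summable_of_tendsto_cofinite_zero <|
      tendsto_ratSMul_zero c ((hD a).comp tendsto_fst_add_snd_cofinite_atTop)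
  have hfiber (i : ℕ) : HasSum (fun j => c (i, j) • D^[i + j] a)
      (((-1 : ℚ) ^ i * (i.factorial : ℚ)⁻¹) • D^[i] (D.exp a)) := by
    simpa only [smul_smul] using
      (hasSum_iterate_exp hcont hD i a).const_smul ((-1 : ℚ) ^ i * (i.factorial : ℚ)⁻¹)
  have hexp : HasSum (fun i => (i.factorial : ℚ)⁻¹ • (⇑(-D))^[i] (D.exp a)) T := by
    refine (hT.prod_fiberwise hfiber).congr_fun fun i => ?_
    rw [iterate_neg, smul_smul, mul_comm]
  have hdiag : HasSum (fun n => (∑ p ∈ antidiagonal n, c p) • D^[n] a) T := by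
    refine hT.sum_antidiagonal.congr_fun fun n => ?_
    rw [sum_smul]
    exact sum_congr rfl fun p hp => by rw [mem_antidiagonal.1 hp]
  rw [(hasSum_exp (D.tendsto_iterate_neg hD) (D.exp a)).unique hexp]
  refine hdiag.unique ((hasSum_ite_eq 0 a).congr_fun fun n => ?_)
  rw [sum_antidiagonal_neg_one_pow_mul_inv_factorial_mul_inv_factorial, ite_smul, one_smul,
    zero_smul]
  split_ifs with hn
  · rw [hn, Function.iterate_zero_apply]
  · rfl

end Exponential

end Derivation

namespace MvPowerSeries

def coeffsIn (σ : Type*) {R : Type*} [CommSemiring R] (J : Ideal R) :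
    Ideal (MvPowerSeries σ R) where
  carrier := {f | ∀ d, coeff d f ∈ J}
  add_mem' hf hg d := by
    rw [map_add]
    exact J.add_mem (hf d) (hg d)
  zero_mem' d := by
    rw [map_zero]
    exact J.zero_mem
  smul_mem' g f hf d := by
    classical
    rw [smul_eq_mul, coeff_mul]
    exact J.sum_mem fun p _ => J.mul_mem_left _ (hf p.2)

instance {σ R : Type*} [Ring R] [TopologicalSpace R] [IsTopologicalRing R] :
    IsTopologicalRing (MvPowerSeries σ R) :=
  WithPiTopology.instIsTopologicalRing σ R

variable {σ R : Type*} [CommRing R] {I : Ideal R}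
  {V : Derivation R (MvPowerSeries σ R) (MvPowerSeries σ R)}

theorem derivation_monomial_one_mem_coeffsIn (hVI : ∀ n, V (X n) ∈ coeffsIn σ I)
    (e : σ →₀ ℕ) : V (monomial e 1) ∈ coeffsIn σ I := by
  classical
  induction e using Finsupp.induction with
  | zero =>
    rw [monomial_zero_one, Derivation.map_one_eq_zero]
    exact zero_mem _
  | single_add n b e _ _ ih =>
    rw [← one_mul (1 : R), ← monomial_mul_monomial, ← X_pow_eq, Derivation.leibniz,
      Derivation.leibniz_pow]
    exact add_mem (Submodule.smul_mem _ _ ih) <| Submodule.smul_mem _ _ <|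
      Submodule.smul_of_tower_mem _ b <| Submodule.smul_mem _ _ (hVI n)

variable [TopologicalSpace R] [IsTopologicalRing R]

theorem derivation_mem_coeffsIn_closure_mul (hV : Continuous V)
    (hVI : ∀ n, V (X n) ∈ coeffsIn σ I) {J : Ideal R} {f : MvPowerSeries σ R}
    (hf : f ∈ coeffsIn σ J) : V f ∈ coeffsIn σ (J * I).closure := fun d => by
  have h := ((WithPiTopology.hasSum_of_monomials_self f).map V hV).map (coeff d)
    (WithPiTopology.continuous_coeff R d)
  refine isClosed_closure.mem_of_tendsto h <| Eventually.of_forall fun s =>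
    Ideal.sum_mem (J * I).closure fun e _ => subset_closure ?_
  have he : monomial e (coeff e f) = coeff e f • monomial e (1 : R) := by
    rw [← map_smul, smul_eq_mul, mul_one]
  rw [Function.comp_apply, Function.comp_apply, he, V.map_smul, coeff_smul]
  exact Ideal.mul_mem_mul (hf e) (derivation_monomial_one_mem_coeffsIn hVI e d)

theorem iterate_derivation_mem_coeffsIn_closure_pow (hV : Continuous V)
    (hVI : ∀ n, V (X n) ∈ coeffsIn σ I) (k : ℕ) (φ : MvPowerSeries σ R) :
    V^[k] φ ∈ coeffsIn σ (I ^ k).closure := by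
  induction k with
  | zero => exact fun d => subset_closure (by simp)
  | succ k ih =>
    rw [Function.iterate_succ_apply', pow_succ]
    exact fun d =>
      Ideal.closure_closure_mul_le _ _ (derivation_mem_coeffsIn_closure_mul hV hVI ih d)

theorem eventually_forall_iterate_derivation_mem [IsLinearTopology R R]
    (hI : ∀ S ∈ 𝓝 (0 : R), ∃ n : ℕ, ((I ^ n : Ideal R) : Set R) ⊆ S) (hV : Continuous V)
    (hVI : ∀ n, V (X n) ∈ coeffsIn σ I) {U : Set (MvPowerSeries σ R)} (hU : U ∈ 𝓝 0) :
    ∀ᶠ k in atTop, ∀ φ, V^[k] φ ∈ U := by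
  obtain ⟨⟨J, d⟩, hJ, hJU⟩ := LinearTopology.hasBasis_nhds_zero.mem_iff.1 hU
  filter_upwards [Ideal.eventually_closure_pow_subset hI hJ] with k hk φ
  exact hJU <| LinearTopology.mem_basis_iff.2 fun e _ =>
    hk (iterate_derivation_mem_coeffsIn_closure_pow hV hVI k φ e)

end MvPowerSeries

theorem formal_time_one_flow_general
    (R : Type*) [CommRing R] [Algebra ℚ R] [UniformSpace R] [IsUniformAddGroup R]
    [CompleteSpace R] [T2Space R] [IsTopologicalRing R]
    (hlin : LinearlyTopologized R)
    (I : Ideal R)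
    (hI : ∀ S ∈ nhds (0 : R), ∃ n : ℕ, ((I ^ n : Ideal R) : Set R) ⊆ S)
    (V : Derivation R (MvPowerSeries ℕ R) (MvPowerSeries ℕ R))
    (hVcont : Continuous V)
    (hVI : ∀ n : ℕ, ∀ d : ℕ →₀ ℕ, MvPowerSeries.coeff d (V (MvPowerSeries.X n)) ∈ I) :
    (∀ S ∈ nhds (0 : MvPowerSeries ℕ R), ∃ K : ℕ, ∀ k ≥ K,
        ∀ φ : MvPowerSeries ℕ R, (⇑V)^[k] φ ∈ S) ∧
    ∃ E E' : MvPowerSeries ℕ R →+* MvPowerSeries ℕ R,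
      Continuous E ∧ Continuous E' ∧
      (∀ φ, HasSum (fun k : ℕ => ((k.factorial : ℚ)⁻¹) • (⇑V)^[k] φ) (E φ)) ∧
      E'.comp E = RingHom.id (MvPowerSeries ℕ R) ∧
      E.comp E' = RingHom.id (MvPowerSeries ℕ R) := by
  have := hlin.isLinearTopology
  have hV : ∀ U ∈ 𝓝 0, ∀ᶠ k in atTop, ∀ φ, V^[k] φ ∈ U := fun U hU =>
    MvPowerSeries.eventually_forall_iterate_derivation_mem hI hVcont hVI hU
  have hV' : ∀ φ, Tendsto (fun k => V^[k] φ) atTop (𝓝 0) := fun φ U hU =>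
    (hV U hU).mono fun _ hk => hk φ
  have hVcont' : Continuous (-V) := by
    rw [Derivation.coe_neg]
    exact hVcont.neg
  -- the product uniformity on `R[[x]]`, whose topology is the one fixed above
  open scoped MvPowerSeries.WithPiTopology in
  exact ⟨fun S hS => eventually_atTop.1 (hV S hS), V.expRingHom hV',
    (-V).expRingHom (V.tendsto_iterate_neg hV'),
    V.continuous_exp hVcont hV,
    (-V).continuous_exp hVcont' fun U hU => V.eventually_forall_iterate_neg_mem (hV U hU),
    V.hasSum_exp hV', RingHom.ext (V.exp_neg_exp hVcont hV'),
    RingHom.ext fun φ =>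
      (by simpa using (-V).exp_neg_exp hVcont' (V.tendsto_iterate_neg hV') φ :
        V.exp ((-V).exp φ) = φ)⟩

/-- time-one flow.  With `R`, `x`, `V` as in the formal flow theorem,
let `I ⊆ R` be an ideal such that every neighbourhood of `0` contains some power
`I^n`.  If all coefficients of the components `V(x_n)` lie in `I`, then
`V^k(φ) → 0` uniformly in `φ`, the substitution `t = 1` in `exp(tV)φ` converges,
and it yields a well-defined time-one flow automorphism of `Spf R[[x]]` (a continuous
ring automorphism with continuous inverse). -/
theorem formal_time_one_flow
    (R : Type*) [CommRing R] [Algebra ℚ R] [UniformSpace R] [IsUniformAddGroup R]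
    [CompleteSpace R] [T2Space R] [IsTopologicalRing R]
    (hlin : LinearlyTopologized R)
    (I : Ideal R)
    (hI : ∀ S ∈ nhds (0 : R), ∃ n : ℕ, ((I ^ n : Ideal R) : Set R) ⊆ S)
    (V : Derivation R (MvPowerSeries ℕ R) (MvPowerSeries ℕ R))
    (hVcont : Continuous V)
    (hVtend : Tendsto (fun n => V (MvPowerSeries.X n)) atTop (nhds 0))
    (hVI : ∀ n : ℕ, ∀ d : ℕ →₀ ℕ, MvPowerSeries.coeff d (V (MvPowerSeries.X n)) ∈ I) :
    (∀ S ∈ nhds (0 : MvPowerSeries ℕ R), ∃ K : ℕ, ∀ k ≥ K,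
        ∀ φ : MvPowerSeries ℕ R, (⇑V)^[k] φ ∈ S) ∧
    ∃ E E' : MvPowerSeries ℕ R →+* MvPowerSeries ℕ R,
      Continuous E ∧ Continuous E' ∧
      (∀ φ, HasSum (fun k : ℕ => ((k.factorial : ℚ)⁻¹) • (⇑V)^[k] φ) (E φ)) ∧
      E'.comp E = RingHom.id (MvPowerSeries ℕ R) ∧
      E.comp E' = RingHom.id (MvPowerSeries ℕ R) :=
  formal_time_one_flow_general R hlin I hI V hVcont hVI
end

section
/- Let M = Eff + (ℤ_{≥0})^m be the sub-semigroup of ℤ^m generated by an effective cone Eff ⊆ L ⊆ ℤ^m and the standard basis, and let R{M} denote the completion of the semigroup ring R[M] with respect to the ideal generated by Q^d, d ∈ Eff \ {0}. Choose a maximal smooth cone σ_{I_0} of Σ, giving a splitting ς : N → ℤ^m of the fan sequence with ς(b_i) = e_i for i ∈ I_0. Then the assignment w_j ↦ Q^{e_j − ς(b_j)} x^{b_j} defines an injective R[Q]-algebra homomorphism from ℂ[M] into ℂ[Q] ⊗ ℂ[N ∩ |Σ|], and e_j − ς(b_j) lies in Eff for each j. -/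
open Finset
open scoped Classical

/-- The map `ℤ^m → N`, `e_j ↦ b_j` (third arrow of the fan sequence). -/
def SmoothFan.toN {D m : ℕ} (F : SmoothFan D m) (v : Fin m → ℤ) : Fin D → ℤ :=
  ∑ j, v j • F.b j

/-- The set of effective curve classes `L ∩ Σ_{σ_I ∈ Σ} C_I`, where
`C_I = {d ∈ L ⊗ ℚ : d_i ≥ 0 for i ∉ I}`. -/
def SmoothFan.EffSet {D m : ℕ} (F : SmoothFan D m) : Set (Fin m → ℤ) :=
  {v | F.toN v = 0 ∧
    ∃ f : Finset (Fin m) → (Fin m → ℚ),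
      ((fun i => (v i : ℚ)) = ∑ I ∈ F.cones, f I) ∧
      ∀ I ∈ F.cones,
        ((∑ j, f I j • (fun t => (F.b j t : ℚ))) = 0) ∧ (∀ i ∉ I, 0 ≤ f I i)}

/-- `Eff(X_Σ)` as an additive submonoid (the semigroup generated by effective classes). -/
def SmoothFan.EffM {D m : ℕ} (F : SmoothFan D m) : AddSubmonoid (Fin m → ℤ) :=
  AddSubmonoid.closure F.EffSet

/-- `(ℤ_{≥0})^m` as a submonoid of `ℤ^m`. -/
def nonnegM (m : ℕ) : AddSubmonoid (Fin m → ℤ) where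
  carrier := {a | ∀ i, 0 ≤ a i}
  zero_mem' := fun _ => le_rfl
  add_mem' := fun ha hb i => add_nonneg (ha i) (hb i)

/-- The semigroup `M = Eff(X_Σ) + (ℤ_{≥0})^m ⊆ ℤ^m`. -/
def SmoothFan.Mmon {D m : ℕ} (F : SmoothFan D m) : AddSubmonoid (Fin m → ℤ) :=
  F.EffM ⊔ nonnegM m

/-- The semigroup `N ∩ |Σ|` of lattice points of the (convex) support. -/
def SmoothFan.SuppM {D m : ℕ} (F : SmoothFan D m) : AddSubmonoid (Fin D → ℤ) :=
  AddSubmonoid.closure {k | F.InSupport k}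

/-- `β(k) = Ψ(k) − ς(k)`, for a splitting `ς` of the fan sequence. -/
noncomputable def SmoothFan.beta {D m : ℕ} (F : SmoothFan D m)
    (ς : (Fin D → ℤ) →+ (Fin m → ℤ)) (k : Fin D → ℤ) : Fin m → ℤ :=
  (fun i => (F.Psi k i : ℤ)) - ς k


/-!
The rays of the maximal cone `σ_{I₀}` span `N ⊗ ℚ`, so the normalisation `ς(b_i) = e_i` on `I₀`
forces every `ς(k)` to be supported on `I₀`. Hence `e_j − ς(b_j)` lies in `L` and is nonnegative
off `I₀`, i.e. lies in `L ∩ C_{I₀} ⊆ Eff`. The additive map `v ↦ (v − ς(π v), π v)` then sends the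
generators of `M` into `Eff × (N ∩ |Σ|)`, and it is injective because `v = (v − ς(π v)) + ς(π v)`;
the algebra embedding is the map it induces on semigroup rings.
-/

lemma AddMonoidHom.eq_zero_of_map_eq_zero_of_span_eq_top {n ι : Type*} [Fintype n]
    [DecidableEq n] (φ : (n → ℤ) →+ ℤ) (b : ι → n → ℤ)
    (hspan : Submodule.span ℚ (Set.range fun i t => (b i t : ℚ)) = ⊤)
    (hφ : ∀ i, φ (b i) = 0) : φ = 0 := by
  let ψ : (n → ℚ) →ₗ[ℚ] ℚ := Fintype.linearCombination ℚ fun t => (φ (Pi.single t 1) : ℚ)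
  have hψ : ∀ v : n → ℤ, ψ (fun t => (v t : ℚ)) = φ v := by
    intro v
    conv_rhs => rw [← Finset.univ_sum_single v]
    simp_rw [ψ, Fintype.linearCombination_apply, map_sum, Int.cast_sum]
    refine Finset.sum_congr rfl fun t _ => ?_
    have hsingle : (Pi.single t (v t) : n → ℤ) = v t • Pi.single t 1 := by
      rw [← Pi.single_smul', smul_eq_mul, mul_one]
    rw [hsingle, map_zsmul, smul_eq_mul, smul_eq_mul, Int.cast_mul]
  have hψ0 : ψ = 0 := LinearMap.ext_on_range hspan fun i => by simp [hψ, hφ]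
  refine AddMonoidHom.ext fun v => ?_
  simpa using (hψ v).symm.trans (LinearMap.congr_fun hψ0 _)

lemma nonnegM_le_closure_single (m : ℕ) :
    nonnegM m ≤ AddSubmonoid.closure (Set.range fun j : Fin m => (Pi.single j 1 : Fin m → ℤ)) := by
  intro v hv
  have hdecomp : v = ∑ j, (v j).toNat • (Pi.single j 1 : Fin m → ℤ) := by
    ext t
    simp [Finset.sum_apply, Pi.single_apply, hv t]
  rw [hdecomp]
  exact sum_mem fun j _ => nsmul_mem (AddSubmonoid.subset_closure (Set.mem_range_self j)) _

namespace SmoothFan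

variable {D m : ℕ} (F : SmoothFan D m)

def toNHom : (Fin m → ℤ) →+ (Fin D → ℤ) := (Fintype.linearCombination ℤ F.b).toAddMonoidHom

@[simp]
lemma toNHom_apply (v : Fin m → ℤ) : F.toNHom v = F.toN v :=
  Fintype.linearCombination_apply ℤ F.b v

def effPart (ς : (Fin D → ℤ) →+ (Fin m → ℤ)) : (Fin m → ℤ) →+ (Fin m → ℤ) :=
  AddMonoidHom.id _ - ς.comp F.toNHom

@[simp]
lemma effPart_apply (ς : (Fin D → ℤ) →+ (Fin m → ℤ)) (v : Fin m → ℤ) :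
    F.effPart ς v = v - ς (F.toN v) := by
  simp [effPart]

lemma eq_of_effPart_eq_of_toN_eq (ς : (Fin D → ℤ) →+ (Fin m → ℤ)) {v w : Fin m → ℤ}
    (heff : F.effPart ς v = F.effPart ς w) (hN : F.toN v = F.toN w) : v = w := by
  simpa [hN] using heff

lemma toN_eq_zero_of_mem_EffSet {v : Fin m → ℤ} (hv : v ∈ F.EffSet) : F.toN v = 0 := hv.1

lemma EffSet_subset_EffM : F.EffSet ⊆ F.EffM := AddSubmonoid.subset_closure

lemma toN_single (j : Fin m) : F.toN (Pi.single j 1) = F.b j := by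
  rw [← toNHom_apply, toNHom, LinearMap.toAddMonoidHom_coe,
    Fintype.linearCombination_apply_single, one_smul]

lemma b_mem_SuppM (j : Fin m) : F.b j ∈ F.SuppM :=
  AddSubmonoid.subset_closure ⟨{j}, F.ray_mem j, Pi.single j 1,
    fun i hi => Finset.mem_singleton.2 (by_contra fun hij => hi (Pi.single_eq_of_ne hij _)),
    by simp [Pi.single_apply]⟩

lemma span_eq_top_of_card_eq {I : Finset (Fin m)} (hI : I ∈ F.cones) (hcard : I.card = D) :
    Submodule.span ℚ (Set.range fun i : I => fun t => (F.b i t : ℚ)) = ⊤ :=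
  (F.smooth I hI).span_eq_top_of_card_eq_finrank' (by simp [hcard])

lemma splitting_apply_eq_zero_of_notMem {I₀ : Finset (Fin m)} (hI₀ : I₀ ∈ F.cones)
    (hcard : I₀.card = D) {ς : (Fin D → ℤ) →+ (Fin m → ℤ)}
    (hς : ∀ i ∈ I₀, ς (F.b i) = Pi.single i 1) (v : Fin D → ℤ) {j : Fin m} (hj : j ∉ I₀) :
    ς v j = 0 := by
  have hzero : (Pi.evalAddMonoidHom (fun _ => ℤ) j).comp ς = 0 :=
    AddMonoidHom.eq_zero_of_map_eq_zero_of_span_eq_top _ (fun i : I₀ => F.b i)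
      (F.span_eq_top_of_card_eq hI₀ hcard) fun i => by
        simp [hς i i.2, Pi.single_eq_of_ne (ne_of_mem_of_not_mem i.2 hj).symm]
  exact DFunLike.congr_fun hzero v

lemma mem_EffSet_of_nonneg {I : Finset (Fin m)} (hI : I ∈ F.cones) {v : Fin m → ℤ}
    (hv : F.toN v = 0) (hnonneg : ∀ i ∉ I, 0 ≤ v i) : v ∈ F.EffSet := by
  refine ⟨hv, fun J => if J = I then fun i => (v i : ℚ) else 0, ?_, fun J _ => ?_⟩
  · rw [Finset.sum_ite_eq' F.cones I, if_pos hI]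
  · by_cases hJI : J = I
    · subst hJI
      refine ⟨?_, fun i hi => by simpa using hnonneg i hi⟩
      ext t
      have ht := congrFun hv t
      simp only [toN, Finset.sum_apply, Pi.smul_apply, smul_eq_mul] at ht
      simp only [↓reduceIte, Finset.sum_apply, Pi.smul_apply, smul_eq_mul, Pi.zero_apply]
      exact_mod_cast ht
    · simp [hJI]

lemma single_sub_splitting_mem_EffSet {I₀ : Finset (Fin m)} (hI₀ : I₀ ∈ F.cones)
    (hcard : I₀.card = D) {ς : (Fin D → ℤ) →+ (Fin m → ℤ)}
    (hsec : ∀ v : Fin D → ℤ, F.toN (ς v) = v)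
    (hς : ∀ i ∈ I₀, ς (F.b i) = Pi.single i 1) (j : Fin m) :
    Pi.single j 1 - ς (F.b j) ∈ F.EffSet := by
  refine F.mem_EffSet_of_nonneg hI₀ ?_ fun i hi => ?_
  · rw [← toNHom_apply, map_sub, toNHom_apply, toNHom_apply, toN_single, hsec, sub_self]
  · rw [Pi.sub_apply, F.splitting_apply_eq_zero_of_notMem hI₀ hcard hς _ hi, sub_zero,
      Pi.single_apply]
    split_ifs <;> norm_num

lemma Mmon_le_comap {A : Type*} [AddCommMonoid A] (g : (Fin m → ℤ) →+ A) (S : AddSubmonoid A)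
    (hEff : ∀ v ∈ F.EffSet, g v ∈ S) (hsingle : ∀ j, g (Pi.single j 1) ∈ S) :
    F.Mmon ≤ S.comap g :=
  sup_le (AddSubmonoid.closure_le.2 hEff)
    ((nonnegM_le_closure_single m).trans
      (AddSubmonoid.closure_le.2 (Set.range_subset_iff.2 hsingle)))

lemma toN_mem_SuppM {v : Fin m → ℤ} (hv : v ∈ F.Mmon) : F.toN v ∈ F.SuppM :=
  F.Mmon_le_comap F.toNHom F.SuppM
    (fun v hv => by simp [F.toN_eq_zero_of_mem_EffSet hv, zero_mem])
    (fun j => by simpa [toN_single] using F.b_mem_SuppM j) hv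

lemma sub_splitting_mem_EffM {I₀ : Finset (Fin m)} (hI₀ : I₀ ∈ F.cones)
    (hcard : I₀.card = D) {ς : (Fin D → ℤ) →+ (Fin m → ℤ)}
    (hsec : ∀ v : Fin D → ℤ, F.toN (ς v) = v)
    (hς : ∀ i ∈ I₀, ς (F.b i) = Pi.single i 1) {v : Fin m → ℤ} (hv : v ∈ F.Mmon) :
    v - ς (F.toN v) ∈ F.EffM := by
  have hle := F.Mmon_le_comap (F.effPart ς) F.EffM
    (fun v hv => by simpa [F.toN_eq_zero_of_mem_EffSet hv] using F.EffSet_subset_EffM hv)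
    (fun j => by
      simpa [toN_single] using
        F.EffSet_subset_EffM (F.single_sub_splitting_mem_EffSet hI₀ hcard hsec hς j))
  simpa using hle hv

end SmoothFan

/-- for a splitting `ς : N → ℤ^m` of the fan sequence determined by a
maximal cone `σ_{I₀}` (`ς(b_i) = e_i` for `i ∈ I₀`), each `e_j − ς(b_j)` lies in
`Eff`, and the assignment `w_j ↦ Q^{e_j − ς(b_j)} x^{b_j}` (i.e. on the semigroup,
`v ↦ (v − ς(π(v)), π(v))`) defines an injective `ℂ[Q]`-algebra homomorphism
`ℂ[M] → ℂ[Q] ⊗ ℂ[N ∩ |Σ|] = ℂ[Eff × (N ∩ |Σ|)]`. -/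
theorem semigroup_ring_embedding {D m : ℕ} (F : SmoothFan D m)
    (I₀ : Finset (Fin m)) (hI₀ : I₀ ∈ F.cones) (hcard : I₀.card = D)
    (ς : (Fin D → ℤ) →+ (Fin m → ℤ))
    (hsec : ∀ v : Fin D → ℤ, F.toN (ς v) = v)
    (hς : ∀ i ∈ I₀, ς (F.b i) = Pi.single i 1) :
    (∀ j : Fin m, Pi.single j 1 - ς (F.b j) ∈ F.EffM) ∧
    ∃ f : AddMonoidAlgebra ℂ ↥F.Mmon →ₐ[ℂ] AddMonoidAlgebra ℂ (↥F.EffM × ↥F.SuppM),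
      Function.Injective f ∧
      ∀ v : ↥F.Mmon,
        ∃ (h1 : (v : Fin m → ℤ) - ς (F.toN (v : Fin m → ℤ)) ∈ F.EffM)
          (h2 : F.toN (v : Fin m → ℤ) ∈ F.SuppM),
          f (AddMonoidAlgebra.single v (1 : ℂ)) =
            AddMonoidAlgebra.single ((⟨_, h1⟩, ⟨_, h2⟩) : ↥F.EffM × ↥F.SuppM) (1 : ℂ) := by
  have hEff v (hv : v ∈ F.Mmon) := F.sub_splitting_mem_EffM hI₀ hcard hsec hς hv
  refine ⟨fun j => F.EffSet_subset_EffM (F.single_sub_splitting_mem_EffSet hI₀ hcard hsec hς j),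
    ?_⟩
  let φ : F.Mmon →+ F.EffM × F.SuppM :=
    (((F.effPart ς).comp F.Mmon.subtype).codRestrict F.EffM fun v => by
      simpa using hEff v v.2).prod
    ((F.toNHom.comp F.Mmon.subtype).codRestrict F.SuppM fun v => by
      simpa using F.toN_mem_SuppM v.2)
  have hφ : Function.Injective φ := fun v w h => Subtype.ext <|
    F.eq_of_effPart_eq_of_toN_eq ς (congrArg (fun p => (p.1 : Fin m → ℤ)) h)
      (congrArg (fun p => (p.2 : Fin D → ℤ)) h)
  refine ⟨AddMonoidAlgebra.mapDomainAlgHom ℂ ℂ φ, AddMonoidAlgebra.mapDomain_injective hφ,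
    fun v => ⟨hEff v v.2, F.toN_mem_SuppM v.2, ?_⟩⟩
  rw [AddMonoidAlgebra.mapDomainAlgHom_apply, AddMonoidAlgebra.mapDomain_single]
  rfl
end

section
/- In the Gauss–Manin system GM(F_λ) of the universal equivariant toric Landau–Ginzburg potential F_λ(x;y) = Σ_k y_k Q^{β(k)} x^k − λ·log x, the relation (zd + dF_λ∧) w^{Ψ(l)} ω_i = ( z l_i w^{Ψ(l)} + Σ_{k∈N∩|Σ|} k_i y_k w^{Ψ(k)+Ψ(l)} − λ_i w^{Ψ(l)} ) ω holds, where ω = dx_1/x_1 ∧ ⋯ ∧ dx_D/x_D and ω_i = ι(x_i ∂/∂x_i)ω. Consequently GM(F_λ) ≅ ℂ[z]{M}[[y]]·ω as a module, with λ_i acting by λ_i · w^{Ψ(l)}ω = ( z l_i w^{Ψ(l)} + Σ_k k_i y_k w^{Ψ(k)+Ψ(l)} )ω. -/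
open Finset
open scoped Classical

/-- Index of a monomial `Q^q · y^{yexp} · z^{zexp} · λ^{λexp} · x^{xexp}` of the module
`ℂ[z]{M}[[y]][λ]·ω`, written in the topological basis of `w`-monomials
(`x`-exponent `k` with `Q`-prefactor recorded in `q`). -/
structure GMIdx (D m : ℕ) where
  q : Fin m → ℤ
  y : (Fin D → ℤ) →₀ ℕ
  z : ℕ
  lam : Fin D →₀ ℕ
  x : Fin D → ℤ

namespace GMIdx

variable {D m : ℕ}

/-- Multiplication by `z`. -/
def Zmul (g : GMIdx D m → ℂ) : GMIdx D m → ℂ :=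
  fun p => if p.z = 0 then 0 else g {p with z := p.z - 1}

/-- (Free) multiplication by the equivariant parameter `λ_i`. -/
noncomputable def Lmul (i : Fin D) (g : GMIdx D m → ℂ) : GMIdx D m → ℂ :=
  fun p => if p.lam i = 0 then 0 else g {p with lam := p.lam - Finsupp.single i 1}

/-- Multiplication by `Q^d`. -/
def Qmul (d : Fin m → ℤ) (g : GMIdx D m → ℂ) : GMIdx D m → ℂ :=
  fun p => g {p with q := p.q - d}

/-- Multiplication (shift operator) by `w^{Ψ(k)} = Q^{β(k)} x^k`. -/
noncomputable def Wmul (F : SmoothFan D m) (ς : (Fin D → ℤ) →+ (Fin m → ℤ))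
    (k : Fin D → ℤ) (g : GMIdx D m → ℂ) : GMIdx D m → ℂ :=
  fun p => g {p with q := p.q - F.beta ς k, x := p.x - k}

/-- Multiplication by the deformation variable `y_k`. -/
noncomputable def Ymul (k : Fin D → ℤ) (g : GMIdx D m → ℂ) : GMIdx D m → ℂ :=
  fun p => if p.y k = 0 then 0 else g {p with y := p.y - Finsupp.single k 1}

/-- The logarithmic vector field `x_i ∂/∂x_i` (diagonal on monomials). -/
def Xlog (i : Fin D) (g : GMIdx D m → ℂ) : GMIdx D m → ℂ :=
  fun p => (p.x i : ℂ) * g p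

/-- Multiplication by `x_i ∂F/∂x_i = Σ_{k ∈ N∩|Σ|} k_i y_k w^{Ψ(k)}`,
the logarithmic derivative of the universal potential `F(x;y) = Σ_k y_k Q^{β(k)} x^k`. -/
noncomputable def FmulX (F : SmoothFan D m) (ς : (Fin D → ℤ) →+ (Fin m → ℤ))
    (i : Fin D) (g : GMIdx D m → ℂ) : GMIdx D m → ℂ :=
  fun p => ∑ k ∈ p.y.support,
    if F.InSupport k then
      (k i : ℂ) * g {p with q := p.q - F.beta ς k, y := p.y - Finsupp.single k 1,
                            x := p.x - k}
    else 0

/-- The `i`-th component of the twisted de Rham differential: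
`(zd + dF_λ∧)(g ω_i) = (z x_i∂_i g + (x_i∂_i F) g − λ_i g) ω`. -/
noncomputable def Dtw (F : SmoothFan D m) (ς : (Fin D → ℤ) →+ (Fin m → ℤ))
    (i : Fin D) (g : GMIdx D m → ℂ) : GMIdx D m → ℂ :=
  Zmul (Xlog i g) + FmulX F ς i g - Lmul i g

open scoped Classical in
/-- The delta element supported at one monomial. -/
noncomputable def delta (p₀ : GMIdx D m) : GMIdx D m → ℂ :=
  fun p => if p = p₀ then 1 else 0

/-- The basis element `w^{Ψ(l)} ω`. -/
noncomputable def wB (F : SmoothFan D m) (ς : (Fin D → ℤ) →+ (Fin m → ℤ))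
    (l : Fin D → ℤ) : GMIdx D m → ℂ :=
  delta ⟨F.beta ς l, 0, 0, 0, l⟩

/-- The image of the twisted differential `zd + dF_λ∧` (the relations submodule). -/
noncomputable def ImD (F : SmoothFan D m) (ς : (Fin D → ℤ) →+ (Fin m → ℤ)) :
    Set (GMIdx D m → ℂ) :=
  {h | ∃ g : Fin D → (GMIdx D m → ℂ), h = ∑ j, Dtw F ς j (g j)}

end GMIdx

/-!
Write `A_j = z x_j∂_j + x_j∂_jF` for the `λ`-free part of the twisted differential, whose
`j`-th component is then `A_j - λ_j`; the displayed relation is a direct computation on the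
monomial `w^{Ψ(l)}`. The `A_j` commute, because `x_a∂_a(x_b∂_bF)` is symmetric in `a, b`, and they
raise the total degree in `z` and `y`. Hence the substitution `λ ↦ A` converges on formal series,
kills every `(A_j - λ_j)g`, and is the identity on `λ`-free series: this gives uniqueness of the
`λ`-free representative. For existence, divide the `λ`-part of `h` by its largest `λ`-variable and
iterate; the iteration converges for the same degree reason.
-/

section LowerFixedPoint

variable {ι P β : Type*}

def DependsOnLower (μ : P → ℕ) (Φ : (ι → P → β) → ι → P → β) : Prop :=
  ∀ u v p, (∀ i q, μ q < μ p → u i q = v i q) → ∀ i, Φ u i p = Φ v i p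

theorem DependsOnLower.eq_of_isFixedPt {μ : P → ℕ} {Φ : (ι → P → β) → ι → P → β}
    (hΦ : DependsOnLower μ Φ) {u v : ι → P → β}
    (hu : Function.IsFixedPt Φ u) (hv : Function.IsFixedPt Φ v) : u = v := by
  suffices key : ∀ n i p, μ p = n → u i p = v i p from
    funext fun i => funext fun p => key _ i p rfl
  intro n
  induction n using Nat.strong_induction_on with
  | _ n ih =>
    intro i p hp
    calc u i p = Φ u i p := (congrFun (congrFun hu i) p).symm
      _ = Φ v i p := hΦ u v p (fun i' q hq => ih _ (hp ▸ hq) i' q rfl) i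
      _ = v i p := congrFun (congrFun hv i) p

/-- The `default` values are never read by a `Φ` that depends only on lower weights. -/
noncomputable def lowerFix [Inhabited β] (μ : P → ℕ) (Φ : (ι → P → β) → ι → P → β) :
    ι → P → β :=
  fun i p => (measure μ).wf.fix (C := fun _ => ι → β)
    (fun p rec i => Φ (fun i' q => if h : μ q < μ p then rec q h i' else default) i p) p i

theorem DependsOnLower.isFixedPt_lowerFix [Inhabited β] {μ : P → ℕ}
    {Φ : (ι → P → β) → ι → P → β} (hΦ : DependsOnLower μ Φ) :
    Function.IsFixedPt Φ (lowerFix μ Φ) := by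
  funext i p
  rw [lowerFix, WellFounded.fix_eq]
  refine (hΦ _ _ p (fun i' q hq => ?_) i).symm
  rw [dif_pos hq]
  rfl

end LowerFixedPoint

section Finsupp

theorem degree_tsub_single_add_one {α : Type*} {y : α →₀ ℕ} {k : α} (hk : y k ≠ 0) :
    (y - Finsupp.single k 1).degree + 1 = y.degree := by
  have hle : Finsupp.single k 1 ≤ y := Finsupp.single_le_iff.mpr (Nat.one_le_iff_ne_zero.mpr hk)
  conv_rhs => rw [← tsub_add_cancel_of_le hle]
  rw [map_add, Finsupp.degree_single]

theorem tsub_single_one_eq_iff {α : Type*} {a b : α →₀ ℕ} {i : α} (hi : a i ≠ 0) :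
    a - Finsupp.single i 1 = b ↔ a = Finsupp.single i 1 + b := by
  rw [tsub_eq_iff_eq_add_of_le (Finsupp.single_le_iff.mpr (Nat.one_le_iff_ne_zero.mpr hi)),
    add_comm]

theorem mem_support_tsub_single_comm {α : Type*} {y : α →₀ ℕ} {k k' : α} :
    k ∈ y.support ∧ k' ∈ (y - Finsupp.single k 1).support
      ↔ k ∈ (y - Finsupp.single k' 1).support ∧ k' ∈ y.support := by
  simp only [Finsupp.mem_support_iff, Finsupp.tsub_apply, Finsupp.single_apply]
  by_cases h : k = k'
  · subst h
    exact and_comm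
  · simp only [h, Ne.symm h, if_false]
    omega

variable {σ : Type*} [LinearOrder σ]

def VarsLE (j : σ) (a : σ →₀ ℕ) : Prop := ∀ t, j < t → a t = 0

theorem varsLE_tsub_single_iff {j : σ} {a : σ →₀ ℕ} :
    VarsLE j (a - Finsupp.single j 1) ↔ VarsLE j a :=
  forall₂_congr fun t ht => by simp [ht.ne]

theorem ne_zero_and_varsLE_iff_eq_max' {a : σ →₀ ℕ} (ha : a ≠ 0) (j : σ) :
    a j ≠ 0 ∧ VarsLE j a ↔ j = a.support.max' (Finsupp.support_nonempty_iff.mpr ha) := by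
  have hne := Finsupp.support_nonempty_iff.mpr ha
  constructor
  · rintro ⟨hj, hvars⟩
    refine le_antisymm (a.support.le_max' j (Finsupp.mem_support_iff.mpr hj))
      (not_lt.mp fun hlt => ?_)
    exact Finsupp.mem_support_iff.mp (a.support.max'_mem hne) (hvars _ hlt)
  · rintro rfl
    refine ⟨Finsupp.mem_support_iff.mp (a.support.max'_mem hne), fun t ht => ?_⟩
    by_contra h
    exact (a.support.le_max' t (Finsupp.mem_support_iff.mpr h)).not_gt ht

end Finsupp

attribute [ext] GMIdx

namespace GMIdx

variable {D m : ℕ}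

noncomputable def weight (p : GMIdx D m) : ℕ := p.z + p.y.degree

noncomputable def atLamZero (g : GMIdx D m → ℂ) : GMIdx D m → ℂ :=
  fun q => g {q with lam := 0}

noncomputable def truncLam (j : Fin D) (g : GMIdx D m → ℂ) : GMIdx D m → ℂ :=
  fun q => if VarsLE j q.lam then g q else 0

/-- The coefficient of `λ_j` in the part of `g` whose largest `λ`-variable is `λ_j`. -/
noncomputable def divLam (j : Fin D) (g : GMIdx D m → ℂ) : GMIdx D m → ℂ :=
  fun q => if VarsLE j q.lam then g {q with lam := q.lam + Finsupp.single j 1} else 0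

theorem withLam_eq_self (p : GMIdx D m) {a : Fin D →₀ ℕ} (ha : p.lam = a) :
    ({p with lam := a} : GMIdx D m) = p := by
  subst ha
  rfl

theorem atLamZero_apply_of_lam_eq_zero (g : GMIdx D m → ℂ) {p : GMIdx D m} (hp : p.lam = 0) :
    atLamZero g p = g p :=
  congrArg g (withLam_eq_self p hp)

theorem divLam_add (j : Fin D) (u v : GMIdx D m → ℂ) :
    divLam j (u + v) = divLam j u + divLam j v := by
  funext q
  simp only [divLam, Pi.add_apply]
  split_ifs <;> simp

theorem divLam_eq_zero_of_lamFree {f : GMIdx D m → ℂ}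
    (hf : ∀ p : GMIdx D m, p.lam ≠ 0 → f p = 0) (j : Fin D) : divLam j f = 0 := by
  funext q
  simp only [divLam, Pi.zero_apply]
  split_ifs
  · exact hf _ fun h => by simpa using congrArg (· j) h
  · rfl

theorem Lmul_zero (j : Fin D) : Lmul j (0 : GMIdx D m → ℂ) = 0 := by
  funext p
  simp [Lmul]

theorem Lmul_neg (j : Fin D) (u : GMIdx D m → ℂ) : Lmul j (-u) = -Lmul j u := by
  funext p
  simp only [Lmul, Pi.neg_apply]
  split_ifs <;> simp

theorem atLamZero_Lmul (j : Fin D) (g : GMIdx D m → ℂ) : atLamZero (Lmul j g) = 0 := by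
  funext q
  simp [atLamZero, Lmul]

theorem atLamZero_truncLam (j : Fin D) (g : GMIdx D m → ℂ) :
    atLamZero (truncLam j g) = atLamZero g := by
  funext q
  simp [atLamZero, truncLam, VarsLE]

theorem Lmul_divLam_apply (j : Fin D) (f : GMIdx D m → ℂ) (p : GMIdx D m) :
    Lmul j (divLam j f) p = if p.lam j ≠ 0 ∧ VarsLE j p.lam then f p else 0 := by
  simp only [Lmul, divLam, varsLE_tsub_single_iff]
  by_cases hj : p.lam j = 0
  · simp [hj]
  · have hle : Finsupp.single j 1 ≤ p.lam :=
      Finsupp.single_le_iff.mpr (Nat.one_le_iff_ne_zero.mpr hj)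
    simp [hj, tsub_add_cancel_of_le hle, withLam_eq_self]

theorem sum_Lmul_divLam_apply (f : GMIdx D m → ℂ) {p : GMIdx D m} (hp : p.lam ≠ 0) :
    ∑ j, Lmul j (divLam j f) p = f p := by
  simp only [Lmul_divLam_apply, ne_zero_and_varsLE_iff_eq_max' hp, Finset.sum_ite_eq',
    Finset.mem_univ, if_true]

theorem divLam_Lmul_of_lt {j j' : Fin D} (h : j' < j) (g : GMIdx D m → ℂ) :
    divLam j' (Lmul j g) = 0 := by
  funext q
  simp only [divLam, Lmul, Pi.zero_apply]
  split_ifs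
  · rfl
  · simp_all [VarsLE, h.ne]
  · rfl

theorem divLam_Lmul_self (j : Fin D) (g : GMIdx D m → ℂ) :
    divLam j (Lmul j g) = truncLam j g := by
  funext q
  simp only [divLam, Lmul, truncLam]
  split_ifs with _ hj
  · simp at hj
  · simp
  · rfl

theorem divLam_Lmul_of_gt {j j' : Fin D} (h : j < j') (g : GMIdx D m → ℂ) :
    divLam j' (Lmul j g) = Lmul j (divLam j' g) := by
  funext q
  have hvars : VarsLE j' (q.lam - Finsupp.single j 1) ↔ VarsLE j' q.lam :=
    forall₂_congr fun t ht => by simp [(h.trans ht).ne]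
  by_cases hj : q.lam j = 0
  · simp [divLam, Lmul, hj, h.ne]
  · have hswap : q.lam + Finsupp.single j' 1 - Finsupp.single j 1
        = q.lam - Finsupp.single j 1 + Finsupp.single j' 1 := by
      ext t
      simp only [Finsupp.tsub_apply, Finsupp.add_apply, Finsupp.single_apply]
      split_ifs <;> omega
    simp [divLam, Lmul, hj, h.ne, hvars, hswap]

theorem divLam_truncLam_of_le {j j' : Fin D} (h : j' ≤ j) (g : GMIdx D m → ℂ) :
    divLam j' (truncLam j g) = divLam j' g := by
  funext q
  simp only [divLam, truncLam]
  split_ifs with hq hj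
  · rfl
  · exact absurd (fun t ht => by simp [hq t (h.trans_lt ht), (h.trans_lt ht).ne]) hj
  · rfl

theorem divLam_truncLam_of_gt {j j' : Fin D} (h : j < j') (g : GMIdx D m → ℂ) :
    divLam j' (truncLam j g) = 0 := by
  funext q
  simp only [divLam, truncLam, Pi.zero_apply]
  split_ifs with _ hj
  · simpa using hj j' h
  · rfl
  · rfl

end GMIdx

/-- Commuting, `λ`-independent operators whose value at a monomial only depends on monomials of
smaller weight. For the Gauss–Manin system, `op j = z x_j∂_j + x_j∂_jF`. -/
structure ContractingFamily (D m : ℕ) where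
  op : Fin D → (GMIdx D m → ℂ) →+ (GMIdx D m → ℂ)
  op_congr : ∀ j u v p, (∀ q, GMIdx.weight q < GMIdx.weight p → u q = v q) → op j u p = op j v p
  op_withLam : ∀ j u p (a : Fin D →₀ ℕ),
    op j u {p with lam := a} = op j (fun q => u {q with lam := a}) p
  op_comm : ∀ j j' u, op j (op j' u) = op j' (op j u)

namespace ContractingFamily

open GMIdx

variable {D m : ℕ} (A : ContractingFamily D m)

noncomputable def twist (j : Fin D) (g : GMIdx D m → ℂ) : GMIdx D m → ℂ := A.op j g - Lmul j g

theorem twist_neg (j : Fin D) (g : GMIdx D m → ℂ) : A.twist j (-g) = -A.twist j g := by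
  rw [twist, twist, map_neg, Lmul_neg, neg_sub, neg_sub_neg]

def relations : Set (GMIdx D m → ℂ) :=
  {h | ∃ g : Fin D → (GMIdx D m → ℂ), h = ∑ j, A.twist j (g j)}

theorem twist_mem_relations (j : Fin D) (g : GMIdx D m → ℂ) : A.twist j g ∈ A.relations := by
  refine ⟨Pi.single j g, ?_⟩
  rw [Finset.sum_eq_single j (fun j' _ hj' => ?_) (by simp), Pi.single_eq_same]
  simp [twist, Pi.single_eq_of_ne hj', Lmul_zero]

theorem op_apply_eq_fibre (j : Fin D) (u : GMIdx D m → ℂ) (p : GMIdx D m) :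
    A.op j u p = A.op j (fun q => u {q with lam := p.lam}) p :=
  A.op_withLam j u p p.lam

theorem divLam_op (j j' : Fin D) (g : GMIdx D m → ℂ) :
    divLam j' (A.op j g) = A.op j (divLam j' g) := by
  funext q
  rw [A.op_apply_eq_fibre j (divLam j' g)]
  simp only [divLam]
  split_ifs
  · exact A.op_withLam j g q _
  · exact (congrFun (map_zero (A.op j)) q).symm

theorem atLamZero_op (j : Fin D) (g : GMIdx D m → ℂ) :
    atLamZero (A.op j g) = A.op j (atLamZero g) := by
  funext q
  exact A.op_withLam j g q 0

theorem dependsOnLower_rec {ι : Type*} (c : ι → GMIdx D m → ℂ) (σ : Fin D → ι → ι)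
    (s : Finset (Fin D)) :
    DependsOnLower weight (fun X i => c i + ∑ j ∈ s, A.op j (X (σ j i))) := by
  intro u v p huv i
  simp only [Pi.add_apply, Finset.sum_apply]
  congr 1
  exact Finset.sum_congr rfl fun j _ => A.op_congr j _ _ p fun q hq => huv _ q hq

/-- Substitution of `A` for `λ`, `Σ_α λ^α g_α ↦ Σ_α A^α g_α`, computed by peeling off the
largest `λ`-variable. -/
noncomputable def eval : (GMIdx D m → ℂ) → GMIdx D m → ℂ :=
  lowerFix weight fun X g => atLamZero g + ∑ j, A.op j (X (divLam j g))

theorem eval_eq (g : GMIdx D m → ℂ) :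
    A.eval g = atLamZero g + ∑ j, A.op j (A.eval (divLam j g)) :=
  (congrFun ((A.dependsOnLower_rec atLamZero divLam univ).isFixedPt_lowerFix) g).symm

theorem eval_add (u v : GMIdx D m → ℂ) : A.eval (u + v) = A.eval u + A.eval v := by
  have key := (A.dependsOnLower_rec (fun uv => atLamZero (uv.1 + uv.2))
    (fun j uv => (divLam j uv.1, divLam j uv.2)) univ).eq_of_isFixedPt
    (u := fun uv => A.eval (uv.1 + uv.2)) (v := fun uv => A.eval uv.1 + A.eval uv.2)
    (funext fun uv => by simp only [A.eval_eq (uv.1 + uv.2), divLam_add])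
    (funext fun uv => by
      simp only [A.eval_eq uv.1, A.eval_eq uv.2, map_add, Finset.sum_add_distrib]
      funext q
      simp only [atLamZero, Pi.add_apply]
      ring)
  exact congrFun key (u, v)

noncomputable def evalHom : (GMIdx D m → ℂ) →+ (GMIdx D m → ℂ) :=
  AddMonoidHom.mk' A.eval A.eval_add

theorem eval_zero : A.eval 0 = 0 := map_zero A.evalHom

theorem eval_sub (u v : GMIdx D m → ℂ) : A.eval (u - v) = A.eval u - A.eval v :=
  map_sub A.evalHom u v

theorem eval_sum {ι : Type*} (s : Finset ι) (u : ι → GMIdx D m → ℂ) :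
    A.eval (∑ i ∈ s, u i) = ∑ i ∈ s, A.eval (u i) :=
  map_sum A.evalHom u s

theorem eval_op (j : Fin D) (g : GMIdx D m → ℂ) : A.eval (A.op j g) = A.op j (A.eval g) := by
  have key := (A.dependsOnLower_rec (fun g => A.op j (atLamZero g)) divLam univ).eq_of_isFixedPt
    (u := fun g => A.eval (A.op j g)) (v := fun g => A.op j (A.eval g))
    (funext fun g => by simp only [A.eval_eq (A.op j g), A.divLam_op, A.atLamZero_op])
    (funext fun g => by simp only [A.eval_eq g, map_add, map_sum, A.op_comm j])
  exact congrFun key g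

theorem eval_eq_eval_truncLam_add (j : Fin D) (g : GMIdx D m → ℂ) :
    A.eval g = A.eval (truncLam j g)
      + ∑ j' ∈ univ.filter (j < ·), A.op j' (A.eval (divLam j' g)) := by
  have htrunc : ∑ j', A.op j' (A.eval (divLam j' (truncLam j g)))
      = ∑ j' ∈ univ.filter (· ≤ j), A.op j' (A.eval (divLam j' g)) := by
    rw [Finset.sum_filter]
    refine Finset.sum_congr rfl fun j' _ => ?_
    split_ifs with h
    · rw [divLam_truncLam_of_le h]
    · rw [divLam_truncLam_of_gt (not_le.mp h), A.eval_zero, map_zero]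
  rw [A.eval_eq g, A.eval_eq (truncLam j g), atLamZero_truncLam, htrunc, add_assoc,
    ← Finset.sum_filter_add_sum_filter_not univ (· ≤ j)]
  simp only [not_le]

theorem eval_Lmul (j : Fin D) (g : GMIdx D m → ℂ) : A.eval (Lmul j g) = A.op j (A.eval g) := by
  have key := (A.dependsOnLower_rec (fun g => A.op j (A.eval (truncLam j g))) divLam
    (univ.filter (j < ·))).eq_of_isFixedPt
    (u := fun g => A.eval (Lmul j g)) (v := fun g => A.op j (A.eval g))
    (funext fun g => by
      have hsingle : A.op j (A.eval (truncLam j g))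
          = ∑ j', if j' = j then A.op j (A.eval (truncLam j g)) else 0 := by simp
      simp only
      rw [A.eval_eq (Lmul j g), atLamZero_Lmul, zero_add, Finset.sum_filter, hsingle,
        ← Finset.sum_add_distrib]
      refine Finset.sum_congr rfl fun j' _ => ?_
      rcases lt_trichotomy j' j with h | rfl | h
      · simp [divLam_Lmul_of_lt h, h.ne, h.not_gt, A.eval_zero]
      · simp [divLam_Lmul_self]
      · simp [divLam_Lmul_of_gt h, h.ne', h])
    (funext fun g => by
      simp only
      rw [A.eval_eq_eval_truncLam_add j g, map_add, map_sum]
      simp only [A.op_comm j])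
  exact congrFun key g

theorem eval_twist (j : Fin D) (g : GMIdx D m → ℂ) : A.eval (A.twist j g) = 0 := by
  rw [twist, eval_sub, eval_op, eval_Lmul, sub_self]

theorem eval_eq_zero_of_mem_relations {h : GMIdx D m → ℂ} (hh : h ∈ A.relations) :
    A.eval h = 0 := by
  obtain ⟨g, rfl⟩ := hh
  rw [eval_sum]
  exact Finset.sum_eq_zero fun j _ => A.eval_twist j (g j)

theorem eval_of_lamFree {f : GMIdx D m → ℂ} (hf : ∀ p : GMIdx D m, p.lam ≠ 0 → f p = 0)
    {p : GMIdx D m} (hp : p.lam = 0) : A.eval f p = f p := by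
  simp [A.eval_eq f, divLam_eq_zero_of_lamFree hf, A.eval_zero,
    atLamZero_apply_of_lam_eq_zero f hp]

/-- The fixed point of `g_j = divLam j (Σ_j' A_j' g_j' - h)`: then `Σ_j λ_j g_j` is the
`λ`-divisible part of `Σ_j A_j g_j - h`, so `Σ_j (A_j - λ_j) g_j` agrees with `h` off `λ = 0`. -/
noncomputable def solve (h : GMIdx D m → ℂ) : Fin D → GMIdx D m → ℂ :=
  lowerFix weight fun G j => divLam j (∑ j', A.op j' (G j') - h)

theorem solve_eq (h : GMIdx D m → ℂ) (j : Fin D) :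
    A.solve h j = divLam j (∑ j', A.op j' (A.solve h j') - h) := by
  refine (congrFun (DependsOnLower.isFixedPt_lowerFix fun G G' p hG j => ?_) j).symm
  simp only [divLam]
  split_ifs
  · simp only [Pi.sub_apply, Finset.sum_apply]
    congr 1
    exact Finset.sum_congr rfl fun j' _ => A.op_congr j' _ _ _ fun q hq => hG j' q hq
  · rfl

theorem sum_twist_solve_apply (h : GMIdx D m → ℂ) {p : GMIdx D m} (hp : p.lam ≠ 0) :
    (∑ j, A.twist j (A.solve h j)) p = h p := by
  have hL : ∑ j, Lmul j (A.solve h j) p = (∑ j, A.op j (A.solve h j)) p - h p := by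
    rw [Finset.sum_congr rfl fun j _ => congrArg (fun g => Lmul j g p) (A.solve_eq h j)]
    exact sum_Lmul_divLam_apply _ hp
  simp only [twist, Finset.sum_apply, Pi.sub_apply, Finset.sum_sub_distrib, hL]
  ring

theorem eq_of_lamFree_of_sub_mem_relations {h h₀ : GMIdx D m → ℂ}
    (hfree : ∀ p : GMIdx D m, p.lam ≠ 0 → h₀ p = 0) (hrel : h - h₀ ∈ A.relations) :
    h₀ = fun p => if p.lam = 0 then A.eval h p else 0 := by
  funext p
  split_ifs with hp
  · have h_eval : A.eval h = A.eval h₀ :=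
      sub_eq_zero.mp ((A.eval_sub h h₀).symm.trans (A.eval_eq_zero_of_mem_relations hrel))
    rw [h_eval, A.eval_of_lamFree hfree hp]
  · exact hfree p hp

theorem existsUnique_lamFree_sub_mem_relations (h : GMIdx D m → ℂ) :
    ∃! h₀ : GMIdx D m → ℂ, (∀ p : GMIdx D m, p.lam ≠ 0 → h₀ p = 0) ∧ h - h₀ ∈ A.relations := by
  have hfree : ∀ p : GMIdx D m, p.lam ≠ 0 → (h - ∑ j, A.twist j (A.solve h j)) p = 0 :=
    fun p hp => by rw [Pi.sub_apply, A.sum_twist_solve_apply h hp, sub_self]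
  have hrel : h - (h - ∑ j, A.twist j (A.solve h j)) ∈ A.relations :=
    ⟨A.solve h, sub_sub_cancel _ _⟩
  refine ⟨_, ⟨hfree, hrel⟩, fun h₀ ⟨hfree₀, hrel₀⟩ => ?_⟩
  rw [A.eq_of_lamFree_of_sub_mem_relations hfree₀ hrel₀,
    A.eq_of_lamFree_of_sub_mem_relations hfree hrel]

end ContractingFamily

namespace GMIdx

variable {D m : ℕ}

theorem Zmul_add (u v : GMIdx D m → ℂ) : Zmul (u + v) = Zmul u + Zmul v := by
  funext p
  simp only [Zmul, Pi.add_apply]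
  split_ifs <;> simp

theorem Zmul_smul (c : ℂ) (u : GMIdx D m → ℂ) : Zmul (c • u) = c • Zmul u := by
  funext p
  simp only [Zmul, Pi.smul_apply]
  split_ifs <;> simp

theorem Xlog_add (i : Fin D) (u v : GMIdx D m → ℂ) : Xlog i (u + v) = Xlog i u + Xlog i v := by
  funext p
  simp [Xlog, mul_add]

theorem Zmul_Xlog (i : Fin D) (u : GMIdx D m → ℂ) : Zmul (Xlog i u) = Xlog i (Zmul u) := by
  funext p
  simp only [Zmul, Xlog]
  split_ifs <;> simp

theorem Xlog_comm (a b : Fin D) (u : GMIdx D m → ℂ) : Xlog a (Xlog b u) = Xlog b (Xlog a u) := by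
  funext p
  simp only [Xlog]
  ring

theorem weight_lt_of_z_ne_zero {p : GMIdx D m} (hz : p.z ≠ 0) :
    weight ({p with z := p.z - 1} : GMIdx D m) < weight p := by
  simp only [weight]
  omega

variable (F : SmoothFan D m) (ς : (Fin D → ℤ) →+ (Fin m → ℤ))

noncomputable def divYW (k : Fin D → ℤ) (p : GMIdx D m) : GMIdx D m :=
  {p with q := p.q - F.beta ς k, y := p.y - Finsupp.single k 1, x := p.x - k}

theorem divYW_comm (k k' : Fin D → ℤ) (p : GMIdx D m) :
    divYW F ς k (divYW F ς k' p) = divYW F ς k' (divYW F ς k p) := by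
  simp only [divYW, sub_right_comm _ (F.beta ς k), sub_right_comm _ k]
  congr 1
  exact tsub_right_comm

theorem weight_divYW_lt {p : GMIdx D m} {k : Fin D → ℤ} (hk : k ∈ p.y.support) :
    weight (divYW F ς k p) < weight p := by
  have := degree_tsub_single_add_one (Finsupp.mem_support_iff.mp hk)
  simp only [weight, divYW]
  omega

theorem FmulX_apply (i : Fin D) (u : GMIdx D m → ℂ) (p : GMIdx D m) :
    FmulX F ς i u p = ∑ k ∈ p.y.support,
      if F.InSupport k then (k i : ℂ) * u (divYW F ς k p) else 0 := rfl

theorem FmulX_add (i : Fin D) (u v : GMIdx D m → ℂ) :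
    FmulX F ς i (u + v) = FmulX F ς i u + FmulX F ς i v := by
  funext p
  simp only [FmulX_apply, Pi.add_apply, ← Finset.sum_add_distrib]
  refine Finset.sum_congr rfl fun k _ => ?_
  split_ifs <;> ring

theorem Zmul_FmulX (i : Fin D) (u : GMIdx D m → ℂ) :
    Zmul (FmulX F ς i u) = FmulX F ς i (Zmul u) := by
  funext p
  by_cases hz : p.z = 0 <;> simp [Zmul, FmulX_apply, hz, divYW]

/-- Multiplication by `x_a∂_a x_b∂_b F = Σ_k k_a k_b y_k w^{Ψ(k)}`. -/
noncomputable def FmulXX (a b : Fin D) (u : GMIdx D m → ℂ) : GMIdx D m → ℂ :=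
  fun p => ∑ k ∈ p.y.support, if F.InSupport k then (k a * k b : ℂ) * u (divYW F ς k p) else 0

theorem FmulXX_comm (a b : Fin D) (u : GMIdx D m → ℂ) : FmulXX F ς a b u = FmulXX F ς b a u := by
  funext p
  exact Finset.sum_congr rfl fun k _ => by rw [mul_comm (k a : ℂ)]

theorem Xlog_FmulX (a b : Fin D) (u : GMIdx D m → ℂ) :
    Xlog a (FmulX F ς b u) = FmulX F ς b (Xlog a u) + FmulXX F ς a b u := by
  funext p
  simp only [Xlog, FmulX_apply, FmulXX, Pi.add_apply, Finset.mul_sum, ← Finset.sum_add_distrib]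
  refine Finset.sum_congr rfl fun k _ => ?_
  split_ifs
  · simp only [divYW, Pi.sub_apply, Int.cast_sub]
    ring
  · simp

theorem FmulX_FmulX_apply (a b : Fin D) (u : GMIdx D m → ℂ) (p : GMIdx D m) :
    FmulX F ς a (FmulX F ς b u) p
      = ∑ k ∈ p.y.support, ∑ k' ∈ (p.y - Finsupp.single k 1).support,
          if F.InSupport k ∧ F.InSupport k' then
            (k a * k' b : ℂ) * u (divYW F ς k' (divYW F ς k p))
          else 0 := by
  simp only [FmulX_apply]
  refine Finset.sum_congr rfl fun k _ => ?_
  split_ifs with hk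
  · rw [Finset.mul_sum]
    refine Finset.sum_congr rfl fun k' _ => ?_
    by_cases hk' : F.InSupport k' <;> simp [hk, hk', mul_assoc]
  · simp [hk]

theorem FmulX_comm (a b : Fin D) (u : GMIdx D m → ℂ) :
    FmulX F ς a (FmulX F ς b u) = FmulX F ς b (FmulX F ς a u) := by
  funext p
  rw [FmulX_FmulX_apply, FmulX_FmulX_apply,
    Finset.sum_comm' fun _ _ => mem_support_tsub_single_comm]
  refine Finset.sum_congr rfl fun k _ => Finset.sum_congr rfl fun k' _ => ?_
  rw [divYW_comm, mul_comm (k' a : ℂ)]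
  exact if_congr and_comm rfl rfl

noncomputable def gmOp (j : Fin D) : (GMIdx D m → ℂ) →+ (GMIdx D m → ℂ) :=
  AddMonoidHom.mk' (fun g => Zmul (Xlog j g) + FmulX F ς j g) fun u v => by
    rw [Xlog_add, Zmul_add, FmulX_add]
    abel

theorem gmOp_apply (j : Fin D) (g : GMIdx D m → ℂ) :
    gmOp F ς j g = Zmul (Xlog j g) + FmulX F ς j g := rfl

theorem gmOp_apply_congr (j : Fin D) (u v : GMIdx D m → ℂ) (p : GMIdx D m)
    (huv : ∀ q, weight q < weight p → u q = v q) : gmOp F ς j u p = gmOp F ς j v p := by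
  simp only [gmOp_apply, Pi.add_apply, FmulX_apply]
  congr 1
  · simp only [Zmul, Xlog]
    split_ifs with hz
    · rfl
    · rw [huv _ (weight_lt_of_z_ne_zero hz)]
  · exact Finset.sum_congr rfl fun k hk => by rw [huv _ (weight_divYW_lt F ς hk)]

theorem gmOp_gmOp (a b : Fin D) (u : GMIdx D m → ℂ) :
    gmOp F ς a (gmOp F ς b u)
      = Zmul (Zmul (Xlog a (Xlog b u))) + FmulX F ς b (Zmul (Xlog a u))
        + FmulX F ς a (Zmul (Xlog b u)) + Zmul (FmulXX F ς a b u)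
        + FmulX F ς a (FmulX F ς b u) := by
  rw [gmOp_apply, gmOp_apply, Xlog_add, Xlog_FmulX, ← Zmul_Xlog, Zmul_add, Zmul_add, Zmul_FmulX,
    FmulX_add]
  abel

theorem gmOp_comm (a b : Fin D) (u : GMIdx D m → ℂ) :
    gmOp F ς a (gmOp F ς b u) = gmOp F ς b (gmOp F ς a u) := by
  rw [gmOp_gmOp, gmOp_gmOp, Xlog_comm a b, FmulXX_comm F ς a b, FmulX_comm F ς a b]
  abel

noncomputable def gaussManinFamily : ContractingFamily D m where
  op := gmOp F ς
  op_congr := gmOp_apply_congr F ς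
  op_withLam _ _ _ _ := rfl
  op_comm := gmOp_comm F ς

theorem relations_gaussManinFamily : (gaussManinFamily F ς).relations = ImD F ς := rfl

theorem Xlog_delta (i : Fin D) (p₀ : GMIdx D m) :
    Xlog i (delta p₀) = (p₀.x i : ℂ) • delta p₀ := by
  funext p
  simp only [Xlog, delta, Pi.smul_apply, smul_eq_mul]
  split_ifs with h
  · rw [h]
  · simp

theorem Zmul_delta (p₀ : GMIdx D m) : Zmul (delta p₀) = delta {p₀ with z := p₀.z + 1} := by
  funext p
  by_cases hz : p.z = 0
  · simp [Zmul, delta, hz, GMIdx.ext_iff]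
  · simp only [Zmul, delta, if_neg hz, GMIdx.ext_iff,
      Nat.sub_eq_iff_eq_add (Nat.one_le_iff_ne_zero.mpr hz)]

theorem Lmul_delta (i : Fin D) (p₀ : GMIdx D m) :
    Lmul i (delta p₀) = delta {p₀ with lam := Finsupp.single i 1 + p₀.lam} := by
  funext p
  by_cases hi : p.lam i = 0
  · simp only [Lmul, delta, if_pos hi]
    refine (if_neg fun hp => ?_).symm
    simp [hp] at hi
  · simp only [Lmul, delta, if_neg hi, GMIdx.ext_iff, tsub_single_one_eq_iff hi]

theorem FmulX_delta (i : Fin D) (p₀ : GMIdx D m) :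
    FmulX F ς i (delta p₀) = fun p => ∑ k ∈ p.y.support,
      if F.InSupport k ∧ p = ⟨F.beta ς k + p₀.q, Finsupp.single k 1 + p₀.y, p₀.z, p₀.lam, k + p₀.x⟩
      then (k i : ℂ) else 0 := by
  funext p
  refine Finset.sum_congr rfl fun k hk => ?_
  simp only [delta, GMIdx.ext_iff, sub_eq_iff_eq_add',
    tsub_single_one_eq_iff (Finsupp.mem_support_iff.mp hk)]
  split_ifs <;> simp_all

theorem Dtw_wB (i : Fin D) (l : Fin D → ℤ) :
    Dtw F ς i (wB F ς l) =
      (l i : ℂ) • delta ⟨F.beta ς l, 0, 1, 0, l⟩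
      + (fun p => ∑ k ∈ p.y.support,
          if F.InSupport k ∧
              p = ⟨F.beta ς k + F.beta ς l, Finsupp.single k 1, 0, 0, k + l⟩ then
            (k i : ℂ)
          else 0)
      - delta ⟨F.beta ς l, 0, 0, Finsupp.single i 1, l⟩ := by
  simp only [Dtw, wB, Xlog_delta, Zmul_smul, Zmul_delta, FmulX_delta, Lmul_delta, add_zero,
    zero_add]

end GMIdx

open GMIdx in
open scoped Classical in
theorem gauss_manin_lambda_relation_general {D m : ℕ} (F : SmoothFan D m)
    (ς : (Fin D → ℤ) →+ (Fin m → ℤ)) :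
    (∀ (i : Fin D) (l : Fin D → ℤ), F.InSupport l →
      Dtw F ς i (wB F ς l) =
        (l i : ℂ) • delta ⟨F.beta ς l, 0, 1, 0, l⟩
        + (fun p => ∑ k ∈ p.y.support,
            if F.InSupport k ∧
                p = ⟨F.beta ς k + F.beta ς l, Finsupp.single k 1, 0, 0, k + l⟩ then
              (k i : ℂ)
            else 0)
        - delta ⟨F.beta ς l, 0, 0, Finsupp.single i 1, l⟩) ∧
    (∀ (i : Fin D) (l : Fin D → ℤ), F.InSupport l →
      Lmul i (wB F ς l)
        - ((l i : ℂ) • delta ⟨F.beta ς l, 0, 1, 0, l⟩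
          + (fun p => ∑ k ∈ p.y.support,
              if F.InSupport k ∧
                  p = ⟨F.beta ς k + F.beta ς l, Finsupp.single k 1, 0, 0, k + l⟩ then
                (k i : ℂ)
              else 0)) ∈ ImD F ς) ∧
    (∀ h : GMIdx D m → ℂ, ∃! h₀ : GMIdx D m → ℂ,
      (∀ p : GMIdx D m, p.lam ≠ 0 → h₀ p = 0) ∧ h - h₀ ∈ ImD F ς) := by
  refine ⟨fun i l _ => Dtw_wB F ς i l, fun i l _ => ?_, fun h => ?_⟩
  · rw [← relations_gaussManinFamily]
    convert (gaussManinFamily F ς).twist_mem_relations i (-wB F ς l) using 1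
    rw [ContractingFamily.twist_neg]
    change _ = -Dtw F ς i (wB F ς l)
    rw [Dtw_wB]
    simp only [wB, Lmul_delta, add_zero]
    abel
  · rw [← relations_gaussManinFamily]
    exact (gaussManinFamily F ς).existsUnique_lamFree_sub_mem_relations h

open GMIdx in
open scoped Classical in
/-- in the Gauss–Manin system of the universal equivariant toric
Landau–Ginzburg potential `F_λ(x;y) = Σ_k y_k Q^{β(k)} x^k − λ·log x`, the relation
`(zd + dF_λ∧) w^{Ψ(l)}ω_i = (z l_i w^{Ψ(l)} + Σ_k k_i y_k w^{Ψ(k)+Ψ(l)} − λ_i w^{Ψ(l)})ω`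
holds; consequently `GM(F_λ) ≅ ℂ[z]{M}[[y]]·ω` (every class has a unique λ-free
representative modulo the image of `zd + dF_λ∧`), with `λ_i` acting by
`λ_i·w^{Ψ(l)}ω = (z l_i w^{Ψ(l)} + Σ_k k_i y_k w^{Ψ(k)+Ψ(l)})ω`. -/
theorem gauss_manin_lambda_relation {D m : ℕ} (F : SmoothFan D m)
    (I₀ : Finset (Fin m)) (hI₀ : I₀ ∈ F.cones) (hcard : I₀.card = D)
    (ς : (Fin D → ℤ) →+ (Fin m → ℤ))
    (hsec : ∀ v : Fin D → ℤ, F.toN (ς v) = v)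
    (hς : ∀ i ∈ I₀, ς (F.b i) = Pi.single i 1) :
    (∀ (i : Fin D) (l : Fin D → ℤ), F.InSupport l →
      Dtw F ς i (wB F ς l) =
        (l i : ℂ) • delta ⟨F.beta ς l, 0, 1, 0, l⟩
        + (fun p => ∑ k ∈ p.y.support,
            if F.InSupport k ∧
                p = ⟨F.beta ς k + F.beta ς l, Finsupp.single k 1, 0, 0, k + l⟩ then
              (k i : ℂ)
            else 0)
        - delta ⟨F.beta ς l, 0, 0, Finsupp.single i 1, l⟩) ∧
    (∀ (i : Fin D) (l : Fin D → ℤ), F.InSupport l →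
      Lmul i (wB F ς l)
        - ((l i : ℂ) • delta ⟨F.beta ς l, 0, 1, 0, l⟩
          + (fun p => ∑ k ∈ p.y.support,
              if F.InSupport k ∧
                  p = ⟨F.beta ς k + F.beta ς l, Finsupp.single k 1, 0, 0, k + l⟩ then
                (k i : ℂ)
              else 0)) ∈ ImD F ς) ∧
    (∀ h : GMIdx D m → ℂ, ∃! h₀ : GMIdx D m → ℂ,
      (∀ p : GMIdx D m, p.lam ≠ 0 → h₀ p = 0) ∧ h - h₀ ∈ ImD F ς) :=
  gauss_manin_lambda_relation_general F ς
end

section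
/- The shift operators on the Gauss–Manin system, given by multiplication by w^{Ψ(k)}, satisfy: (i) w^{Ψ(k)} ∘ w^{Ψ(l)} = Q^{d(k,l)} w^{Ψ(k+l)}; (ii) w^{Ψ(k)} ∘ f(Q,y,λ) = f(Q,y,λ−kz) ∘ w^{Ψ(k)} for any f ∈ ℂ[[Q]][[y]][λ], where the λ-action is the one induced by the relation (zd+dF_λ∧)ω_i ≡ 0; (iii) w^{Ψ(k)} commutes with ∇_{∂/∂y_l} and with the grading operator Gr. -/
open Finset
open scoped Classical

/-- Index of a monomial `Q^q · y^{yexp} · z^{zexp} · x^{xexp}` of the λ-free presentation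
`GM(F_λ) ≅ ℂ[z]{M}[[y]]·ω` of the Gauss–Manin system. -/
structure GMIdx0 (D m : ℕ) where
  q : Fin m → ℤ
  y : (Fin D → ℤ) →₀ ℕ
  z : ℕ
  x : Fin D → ℤ

namespace GMIdx0

variable {D m : ℕ}

/-- Multiplication by `z`. -/
def Zmul (g : GMIdx0 D m → ℂ) : GMIdx0 D m → ℂ :=
  fun p => if p.z = 0 then 0 else g {p with z := p.z - 1}

/-- Multiplication by `Q^d`. -/
def Qmul (d : Fin m → ℤ) (g : GMIdx0 D m → ℂ) : GMIdx0 D m → ℂ :=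
  fun p => g {p with q := p.q - d}

/-- The shift operator: multiplication by `w^{Ψ(k)} = Q^{β(k)} x^k`. -/
noncomputable def Wmul (F : SmoothFan D m) (ς : (Fin D → ℤ) →+ (Fin m → ℤ))
    (k : Fin D → ℤ) (g : GMIdx0 D m → ℂ) : GMIdx0 D m → ℂ :=
  fun p => g {p with q := p.q - F.beta ς k, x := p.x - k}

/-- Multiplication by the deformation variable `y_k`. -/
noncomputable def Ymul (k : Fin D → ℤ) (g : GMIdx0 D m → ℂ) : GMIdx0 D m → ℂ :=
  fun p => if p.y k = 0 then 0 else g {p with y := p.y - Finsupp.single k 1}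

/-- The logarithmic vector field `x_i ∂/∂x_i`. -/
def Xlog (i : Fin D) (g : GMIdx0 D m → ℂ) : GMIdx0 D m → ℂ :=
  fun p => (p.x i : ℂ) * g p

open scoped Classical in
/-- Multiplication by `x_i ∂F/∂x_i = Σ_k k_i y_k w^{Ψ(k)}`. -/
noncomputable def FmulX (F : SmoothFan D m) (ς : (Fin D → ℤ) →+ (Fin m → ℤ))
    (i : Fin D) (g : GMIdx0 D m → ℂ) : GMIdx0 D m → ℂ :=
  fun p => ∑ k ∈ p.y.support,
    if F.InSupport k then
      (k i : ℂ) * g {p with q := p.q - F.beta ς k, y := p.y - Finsupp.single k 1,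
                            x := p.x - k}
    else 0

/-- The action of the equivariant parameter `λ_i` on the λ-free presentation, induced by
the relation `(zd + dF_λ∧)ω_i ≡ 0`: `λ_i = z x_i∂_i + (x_i∂_iF)·`. -/
noncomputable def Lop (F : SmoothFan D m) (ς : (Fin D → ℤ) →+ (Fin m → ℤ))
    (i : Fin D) (g : GMIdx0 D m → ℂ) : GMIdx0 D m → ℂ :=
  Zmul (Xlog i g) + FmulX F ς i g

/-- The formal partial derivative `∂/∂y_k`. -/
noncomputable def Ypartial (k : Fin D → ℤ) (g : GMIdx0 D m → ℂ) : GMIdx0 D m → ℂ :=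
  fun p => ((p.y k + 1 : ℕ) : ℂ) * g {p with y := p.y + Finsupp.single k 1}

/-- `z∇_{∂/∂y_k} = z ∂/∂y_k + w^{Ψ(k)}·`, the Gauss–Manin connection (rescaled). -/
noncomputable def ZNabla (F : SmoothFan D m) (ς : (Fin D → ℤ) →+ (Fin m → ℤ))
    (k : Fin D → ℤ) (g : GMIdx0 D m → ℂ) : GMIdx0 D m → ℂ :=
  Zmul (Ypartial k g) + Wmul F ς k g

/-- The grading operator `Gr = E_y + z∂/∂z + Σ_i λ_i ∂/∂λ_i` (on λ-free elements). -/
def Gr (g : GMIdx0 D m → ℂ) : GMIdx0 D m → ℂ :=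
  fun p => (((p.y.sum fun _ n => n) + p.z : ℕ) : ℂ) * g p

end GMIdx0

/-!
Multiplication by `w^{Ψ(k)} = Q^{β(k)} x^k` translates the `(q, x)`-exponents of a monomial
by `(β(k), k)`. Such translations commute with each other, with `Q^d`, and with every operator
that only reads or changes the `y`- and `z`-exponents; as `ς` is additive,
`β(k) + β(l) = d(k,l) + β(k+l)`, which is (i). The only operator reading the `x`-exponent is
`x_i ∂/∂x_i`, whose eigenvalue `x_i` drops by `k_i` when pulled back along the translation;
through `λ_i = z x_i∂_i + x_i∂_iF` this is the shift `λ_i ↦ λ_i − k_i z`.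
-/

theorem SmoothFan.beta_add_beta {D m : ℕ} (F : SmoothFan D m) (ς : (Fin D → ℤ) →+ (Fin m → ℤ))
    (k l : Fin D → ℤ) : F.beta ς k + F.beta ς l = F.dEff k l + F.beta ς (k + l) := by
  funext i
  simp only [SmoothFan.beta, SmoothFan.dEff, map_add, Pi.add_apply, Pi.sub_apply]
  ring

namespace GMIdx0

variable {D m : ℕ}

theorem Zmul_sub (f g : GMIdx0 D m → ℂ) : Zmul (f - g) = Zmul f - Zmul g := by
  funext p
  by_cases hz : p.z = 0 <;> simp [Zmul, hz]

theorem Zmul_smul (c : ℂ) (g : GMIdx0 D m → ℂ) : Zmul (c • g) = c • Zmul g := by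
  funext p
  by_cases hz : p.z = 0 <;> simp [Zmul, hz]

theorem FmulX_apply (F : SmoothFan D m) (ς : (Fin D → ℤ) →+ (Fin m → ℤ)) (i : Fin D)
    (g : GMIdx0 D m → ℂ) (p : GMIdx0 D m) :
    FmulX F ς i g p = ∑ j ∈ p.y.support,
      if F.InSupport j then (j i : ℂ) * Ymul j (Wmul F ς j g) p else 0 := by
  refine Finset.sum_congr rfl fun j hj => ?_
  rw [Ymul, if_neg (Finsupp.mem_support_iff.mp hj)]
  rfl

section Wmul

variable (F : SmoothFan D m) (ς : (Fin D → ℤ) →+ (Fin m → ℤ)) (k : Fin D → ℤ)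

theorem Wmul_apply (g : GMIdx0 D m → ℂ) (p : GMIdx0 D m) :
    Wmul F ς k g p = g {p with q := p.q - F.beta ς k, x := p.x - k} :=
  rfl

theorem Wmul_add (f g : GMIdx0 D m → ℂ) : Wmul F ς k (f + g) = Wmul F ς k f + Wmul F ς k g :=
  rfl

theorem Wmul_Wmul (l : Fin D → ℤ) (g : GMIdx0 D m → ℂ) :
    Wmul F ς k (Wmul F ς l g) = Qmul (F.dEff k l) (Wmul F ς (k + l) g) := by
  funext p
  simp only [Wmul, Qmul, sub_sub, F.beta_add_beta]

theorem Wmul_comm (l : Fin D → ℤ) (g : GMIdx0 D m → ℂ) :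
    Wmul F ς k (Wmul F ς l g) = Wmul F ς l (Wmul F ς k g) := by
  funext p
  simp only [Wmul, sub_right_comm _ (F.beta ς k), sub_right_comm _ k]

theorem Wmul_Qmul (d : Fin m → ℤ) (g : GMIdx0 D m → ℂ) :
    Wmul F ς k (Qmul d g) = Qmul d (Wmul F ς k g) := by
  funext p
  simp only [Wmul, Qmul, sub_right_comm _ d]

theorem Wmul_Ymul (j : Fin D → ℤ) (g : GMIdx0 D m → ℂ) :
    Wmul F ς k (Ymul j g) = Ymul j (Wmul F ς k g) :=
  rfl

theorem Wmul_Zmul (g : GMIdx0 D m → ℂ) : Wmul F ς k (Zmul g) = Zmul (Wmul F ς k g) :=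
  rfl

theorem Wmul_Ypartial (l : Fin D → ℤ) (g : GMIdx0 D m → ℂ) :
    Wmul F ς k (Ypartial l g) = Ypartial l (Wmul F ς k g) :=
  rfl

theorem Wmul_Gr (g : GMIdx0 D m → ℂ) : Wmul F ς k (Gr g) = Gr (Wmul F ς k g) :=
  rfl

theorem Wmul_Xlog (i : Fin D) (g : GMIdx0 D m → ℂ) :
    Wmul F ς k (Xlog i g) = Xlog i (Wmul F ς k g) - (k i : ℂ) • Wmul F ς k g := by
  funext p
  simp only [Wmul, Xlog, Pi.sub_apply, Pi.smul_apply, smul_eq_mul]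
  push_cast
  ring

theorem Wmul_FmulX (i : Fin D) (g : GMIdx0 D m → ℂ) :
    Wmul F ς k (FmulX F ς i g) = FmulX F ς i (Wmul F ς k g) := by
  funext p
  rw [Wmul_apply, FmulX_apply, FmulX_apply]
  refine Finset.sum_congr rfl fun j _ => ?_
  rw [← Wmul_apply F ς k (Ymul j _), Wmul_Ymul, Wmul_comm]

theorem Wmul_Lop (i : Fin D) (g : GMIdx0 D m → ℂ) :
    Wmul F ς k (Lop F ς i g) = Lop F ς i (Wmul F ς k g) - (k i : ℂ) • Zmul (Wmul F ς k g) := by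
  rw [Lop, Lop, Wmul_add, Wmul_Zmul, Wmul_Xlog, Wmul_FmulX, Zmul_sub, Zmul_smul]
  abel

theorem Wmul_ZNabla (l : Fin D → ℤ) (g : GMIdx0 D m → ℂ) :
    Wmul F ς k (ZNabla F ς l g) = ZNabla F ς l (Wmul F ς k g) := by
  rw [ZNabla, ZNabla, Wmul_add, Wmul_Zmul, Wmul_Ypartial, Wmul_comm]

end Wmul

end GMIdx0

open GMIdx0 in
theorem shift_operators_on_gauss_manin_general {D m : ℕ} (F : SmoothFan D m)
    (ς : (Fin D → ℤ) →+ (Fin m → ℤ))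
    (k : Fin D → ℤ) :
    (∀ l : Fin D → ℤ, F.InSupport l →
      Wmul F ς k ∘ Wmul F ς l = Qmul (F.dEff k l) ∘ Wmul F ς (k + l)) ∧
    (∀ d : Fin m → ℤ, Wmul F ς k ∘ Qmul d = Qmul d ∘ Wmul F ς k) ∧
    (∀ j : Fin D → ℤ, Wmul F ς k ∘ Ymul j = Ymul j ∘ Wmul F ς k) ∧
    (∀ i : Fin D, ∀ g : GMIdx0 D m → ℂ,
      Wmul F ς k (Lop F ς i g) =
        Lop F ς i (Wmul F ς k g) - (k i : ℂ) • Zmul (Wmul F ς k g)) ∧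
    (∀ l : Fin D → ℤ, F.InSupport l →
      Wmul F ς k ∘ ZNabla F ς l = ZNabla F ς l ∘ Wmul F ς k) ∧
    (Wmul F ς k ∘ Gr = Gr ∘ Wmul F ς k) :=
  ⟨fun l _ => funext (Wmul_Wmul F ς k l),
    fun d => funext (Wmul_Qmul F ς k d),
    fun j => funext (Wmul_Ymul F ς k j),
    Wmul_Lop F ς k,
    fun l _ => funext (Wmul_ZNabla F ς k l),
    funext (Wmul_Gr F ς k)⟩

open GMIdx0 in
/-- the shift operators `w^{Ψ(k)}` on the Gauss–Manin system satisfy: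
(i) `w^{Ψ(k)} ∘ w^{Ψ(l)} = Q^{d(k,l)} w^{Ψ(k+l)}`;
(ii) `w^{Ψ(k)} ∘ f(Q,y,λ) = f(Q,y,λ−kz) ∘ w^{Ψ(k)}`, on the multiplicative generators:
`w^{Ψ(k)}` commutes with `Q^d` and `y_j`, and `w^{Ψ(k)} ∘ λ_i = (λ_i − k_i z) ∘ w^{Ψ(k)}`
for the induced `λ_i`-action;
(iii) `w^{Ψ(k)}` commutes with the Gauss–Manin connection `∇_{∂/∂y_l}` and with the
grading operator `Gr`. -/
theorem shift_operators_on_gauss_manin {D m : ℕ} (F : SmoothFan D m)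
    (I₀ : Finset (Fin m)) (hI₀ : I₀ ∈ F.cones) (hcard : I₀.card = D)
    (ς : (Fin D → ℤ) →+ (Fin m → ℤ))
    (hsec : ∀ v : Fin D → ℤ, F.toN (ς v) = v)
    (hς : ∀ i ∈ I₀, ς (F.b i) = Pi.single i 1)
    (k : Fin D → ℤ) (hk : F.InSupport k) :
    (∀ l : Fin D → ℤ, F.InSupport l →
      Wmul F ς k ∘ Wmul F ς l = Qmul (F.dEff k l) ∘ Wmul F ς (k + l)) ∧
    (∀ d : Fin m → ℤ, Wmul F ς k ∘ Qmul d = Qmul d ∘ Wmul F ς k) ∧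
    (∀ j : Fin D → ℤ, Wmul F ς k ∘ Ymul j = Ymul j ∘ Wmul F ς k) ∧
    (∀ i : Fin D, ∀ g : GMIdx0 D m → ℂ,
      Wmul F ς k (Lop F ς i g) =
        Lop F ς i (Wmul F ς k g) - (k i : ℂ) • Zmul (Wmul F ς k g)) ∧
    (∀ l : Fin D → ℤ, F.InSupport l →
      Wmul F ς k ∘ ZNabla F ς l = ZNabla F ς l ∘ Wmul F ς k) ∧
    (Wmul F ς k ∘ Gr = Gr ∘ Wmul F ς k) :=
  shift_operators_on_gauss_manin_general F ς k
end
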